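/- arXiv:1501.04657 — 6 statements merged into one kernel-verified Lean document; each statement's English description precedes it below -/
import Mathlib

section
/- Let k be a field and let a_1(t),...,a_s(t) ∈ k[t] be nonzero polynomials with gcd(a_1,...,a_s) = g(t). Then for every integer d ≥ -1 + max_{i,j} deg lcm(a_i, a_j), every polynomial of the form g(t)·b(t) with deg b ≤ d - deg g can be written as Σ_i a_i(t)·x_i(t) with deg x_i ≤ d - deg a_i. That is, Σ_i a_i(t)·k[t]_{≤ d - deg a_i} = g(t)·k[t]_{≤ d - deg g}. -/
open Polynomial Module

namespace EffectiveEuclidAux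

variable {k : Type*} [Field k]

noncomputable instance : GCDMonoid (Polynomial k) := by
  classical exact EuclideanDomain.gcdMonoid _

noncomputable def M (a : k[X]) (n : ℕ) : Submodule k k[X] :=
  (degreeLT k n).map (LinearMap.mulLeft k a)

lemma mem_M {a : k[X]} {n : ℕ} {p : k[X]} :
    p ∈ M a n ↔ ∃ x : k[X], x.degree < (n : WithBot ℕ) ∧ p = a * x := by
  constructor
  · rintro ⟨x, hx, rfl⟩
    exact ⟨x, mem_degreeLT.mp hx, rfl⟩
  · rintro ⟨x, hx, rfl⟩
    exact ⟨x, mem_degreeLT.mpr hx, rfl⟩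

lemma M_zero (n : ℕ) : M (0 : k[X]) n = ⊥ := by
  ext p
  rw [Submodule.mem_bot, mem_M]
  constructor
  · rintro ⟨x, _, rfl⟩; exact zero_mul x
  · rintro rfl
    exact ⟨0, mem_degreeLT.mp ((degreeLT k n).zero_mem), (zero_mul 0).symm⟩

instance (n : ℕ) : Module.Finite k (degreeLT k n) :=
  Module.Finite.equiv (degreeLTEquiv k n).symm

instance (a : k[X]) (n : ℕ) : Module.Finite k (M a n) :=
  Module.Finite.map _ _

lemma mulLeft_injective {a : k[X]} (ha : a ≠ 0) :
    Function.Injective (LinearMap.mulLeft k a) := fun x y h => by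
  simp only [LinearMap.mulLeft_apply] at h
  exact mul_left_cancel₀ ha h

lemma finrank_M {a : k[X]} (ha : a ≠ 0) (n : ℕ) :
    Module.finrank k (M a n) = n := by
  have e : (M a n) ≃ₗ[k] (Fin n → k) :=
    (Submodule.equivMapOfInjective _ (mulLeft_injective ha)
      (degreeLT k n)).symm.trans (degreeLTEquiv k n)
  rw [e.finrank_eq, Module.finrank_fin_fun]

lemma M_le_M {a b : k[X]} (ha : a ≠ 0) (hb : b ≠ 0) (hab : a ∣ b) {m n : ℕ}
    (h : (m : ℤ) + b.natDegree ≤ (n : ℤ) + a.natDegree) : M b m ≤ M a n := by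
  intro p hp
  rw [mem_M] at hp
  obtain ⟨x, hx, rfl⟩ := hp
  obtain ⟨c, rfl⟩ := hab
  rcases eq_or_ne x 0 with rfl | hx0
  · rw [mul_zero]; exact (M a n).zero_mem
  have hc : c ≠ 0 := right_ne_zero_of_mul hb
  rw [mem_M]
  refine ⟨c * x, ?_, by ring⟩
  rw [← natDegree_lt_iff_degree_lt (mul_ne_zero hc hx0)]
  rw [← natDegree_lt_iff_degree_lt hx0] at hx
  have hdb : (a * c).natDegree = a.natDegree + c.natDegree := natDegree_mul ha hc
  have hcx : (c * x).natDegree = c.natDegree + x.natDegree := natDegree_mul hc hx0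
  omega

lemma assoc_ne_zero {p q : k[X]} (h : Associated p q) (hq : q ≠ 0) : p ≠ 0 := by
  obtain ⟨u, hu⟩ := h
  exact fun hp => hq (by rw [← hu, hp, zero_mul])

lemma natDegree_eq_of_associated {p q : k[X]} (h : Associated p q) (hq : q ≠ 0) :
    p.natDegree = q.natDegree := by
  have hp : p ≠ 0 := assoc_ne_zero h hq
  exact le_antisymm (natDegree_le_of_dvd h.dvd hq) (natDegree_le_of_dvd h.symm.dvd hp)

lemma M_assoc {a b : k[X]} (h : Associated a b) (n : ℕ) : M a n = M b n := by
  rcases eq_or_ne a 0 with rfl | ha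
  · have hb : b = 0 := by
      by_contra hb
      exact assoc_ne_zero h hb rfl
    rw [hb]
  have hb : b ≠ 0 := fun hb0 => by
    have := assoc_ne_zero h.symm ha
    exact this hb0
  have hd : a.natDegree = b.natDegree := natDegree_eq_of_associated h hb
  exact le_antisymm (M_le_M hb ha h.symm.dvd (by omega)) (M_le_M ha hb h.dvd (by omega))

/-- `nn d m = max 0 (d + 1 - m)`. -/
def nn (d : ℤ) (m : ℕ) : ℕ := (d + 1 - m).toNat

lemma pair (a b : k[X]) (ha : a ≠ 0) (hb : b ≠ 0) (d : ℤ)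
    (hlcm : ((lcm a b).natDegree : ℤ) ≤ d + 1) :
    M a (nn d a.natDegree) ⊔ M b (nn d b.natDegree)
      = M (gcd a b) (nn d (gcd a b).natDegree) := by
  have hg : gcd a b ≠ 0 := fun h0 => ha ((gcd_eq_zero_iff a b).mp h0).1
  have hl : lcm a b ≠ 0 := fun h0 => by
    rcases (lcm_eq_zero_iff a b).mp h0 with h | h
    · exact ha h
    · exact hb h
  have hda : a.natDegree ≤ (lcm a b).natDegree := natDegree_le_of_dvd (dvd_lcm_left a b) hl
  have hdb : b.natDegree ≤ (lcm a b).natDegree := natDegree_le_of_dvd (dvd_lcm_right a b) hl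
  have hdga : (gcd a b).natDegree ≤ a.natDegree := natDegree_le_of_dvd (gcd_dvd_left a b) ha
  have hsum : (gcd a b).natDegree + (lcm a b).natDegree = a.natDegree + b.natDegree := by
    have h1 : ((gcd a b) * (lcm a b)).natDegree = (a * b).natDegree :=
      natDegree_eq_of_associated (gcd_mul_lcm a b) (mul_ne_zero ha hb)
    rw [natDegree_mul hg hl, natDegree_mul ha hb] at h1
    exact h1
  -- sup ≤ M (gcd a b)
  have hle : M a (nn d a.natDegree) ⊔ M b (nn d b.natDegree)
      ≤ M (gcd a b) (nn d (gcd a b).natDegree) := by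
    refine sup_le ?_ ?_
    · exact M_le_M hg ha (gcd_dvd_left a b) (by simp only [nn]; omega)
    · exact M_le_M hg hb (gcd_dvd_right a b) (by simp only [nn]; omega)
  -- inf = M (lcm a b)
  have hinf : M a (nn d a.natDegree) ⊓ M b (nn d b.natDegree)
      = M (lcm a b) (nn d (lcm a b).natDegree) := by
    refine le_antisymm ?_ (le_inf
      (M_le_M ha hl (dvd_lcm_left a b) (by simp only [nn]; omega))
      (M_le_M hb hl (dvd_lcm_right a b) (by simp only [nn]; omega)))
    intro p hp
    obtain ⟨hpa, hpb⟩ := Submodule.mem_inf.mp hp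
    rw [mem_M] at hpa hpb
    obtain ⟨x, hx, rfl⟩ := hpa
    obtain ⟨y, hy, hxy⟩ := hpb
    rcases eq_or_ne x 0 with rfl | hx0
    · rw [mul_zero]; exact Submodule.zero_mem _
    have hpd : lcm a b ∣ a * x := lcm_dvd ⟨x, rfl⟩ ⟨y, hxy⟩
    obtain ⟨z, hz⟩ := hpd
    have hp0 : a * x ≠ 0 := mul_ne_zero ha hx0
    have hz0 : z ≠ 0 := fun h0 => hp0 (by rw [hz, h0, mul_zero])
    rw [mem_M]
    refine ⟨z, ?_, hz⟩
    rw [← natDegree_lt_iff_degree_lt hz0]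
    rw [← natDegree_lt_iff_degree_lt hx0] at hx
    have h1 : (a * x).natDegree = a.natDegree + x.natDegree := natDegree_mul ha hx0
    have h2 : (a * x).natDegree = (lcm a b).natDegree + z.natDegree := by
      rw [hz]; exact natDegree_mul hl hz0
    simp only [nn] at hx ⊢
    omega
  -- dimension count
  have hfr : Module.finrank k (M a (nn d a.natDegree) ⊔ M b (nn d b.natDegree) : Submodule k k[X])
      + nn d (lcm a b).natDegree = nn d a.natDegree + nn d b.natDegree := by
    have := Submodule.finrank_sup_add_finrank_inf_eq
      (M a (nn d a.natDegree)) (M b (nn d b.natDegree))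
    rw [hinf, finrank_M ha, finrank_M hb, finrank_M hl] at this
    exact this
  have hnn : nn d (gcd a b).natDegree + nn d (lcm a b).natDegree
      = nn d a.natDegree + nn d b.natDegree := by
    simp only [nn]; omega
  refine (Submodule.eq_of_le_of_finrank_le hle ?_).symm.symm
  rw [finrank_M hg]
  omega

noncomputable def gcdAux : ∀ {s : ℕ}, (Fin s → k[X]) → k[X]
  | 0, _ => 0
  | _ + 1, a => gcd (a 0) (gcdAux (a ∘ Fin.succ))

lemma gcdAux_dvd : ∀ {s : ℕ} (a : Fin s → k[X]) (i : Fin s), gcdAux a ∣ a i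
  | _ + 1, a, i => by
    refine Fin.cases ?_ (fun j => ?_) i
    · exact gcd_dvd_left _ _
    · exact dvd_trans (gcd_dvd_right _ _) (gcdAux_dvd (a ∘ Fin.succ) j)

lemma dvd_gcdAux : ∀ {s : ℕ} (a : Fin s → k[X]) (h : k[X]), (∀ i, h ∣ a i) → h ∣ gcdAux a
  | 0, _, h, _ => dvd_zero h
  | _ + 1, a, h, hh => dvd_gcd (hh 0) (dvd_gcdAux (a ∘ Fin.succ) h (fun j => hh j.succ))

lemma gcdAux_ne_zero {s : ℕ} (a : Fin (s + 1) → k[X]) (ha : ∀ i, a i ≠ 0) :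
    gcdAux a ≠ 0 := fun h0 => ha 0 (zero_dvd_iff.mp (h0 ▸ gcdAux_dvd a 0))

lemma main_aux (d : ℤ) : ∀ (s : ℕ) (a : Fin s → k[X]), (∀ i, a i ≠ 0) →
    (∀ i j, ((lcm (a i) (a j)).natDegree : ℤ) ≤ d + 1) →
    (⨆ i, M (a i) (nn d (a i).natDegree)) = M (gcdAux a) (nn d (gcdAux a).natDegree)
  | 0, a, _, _ => by
    rw [show gcdAux a = 0 from rfl, M_zero, iSup_of_empty]
  | s + 1, a, ha, hlcm => by
    have IH := main_aux d s (a ∘ Fin.succ) (fun i => ha i.succ)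
      (fun i j => hlcm i.succ j.succ)
    have hsplit : (⨆ i, M (a i) (nn d (a i).natDegree))
        = M (a 0) (nn d (a 0).natDegree)
          ⊔ ⨆ i : Fin s, M (a i.succ) (nn d (a i.succ).natDegree) := by
      refine le_antisymm (iSup_le fun i => ?_) (sup_le (le_iSup (fun i : Fin (s + 1) => M (a i) (nn d (a i).natDegree)) 0)
        (iSup_le fun j => le_iSup (fun i => M (a i) (nn d (a i).natDegree)) j.succ))
      refine Fin.cases ?_ (fun j => ?_) i
      · exact le_sup_left
      · exact le_trans (le_iSup (fun i : Fin s =>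
          M (a i.succ) (nn d (a i.succ).natDegree)) j) le_sup_right
    have IH' : (⨆ i : Fin s, M (a i.succ) (nn d (a i.succ).natDegree))
        = M (gcdAux (a ∘ Fin.succ)) (nn d (gcdAux (a ∘ Fin.succ)).natDegree) := IH
    rw [hsplit, IH']
    cases s with
    | zero =>
      have h0 : gcdAux ((a ∘ Fin.succ) : Fin 0 → k[X]) = 0 := rfl
      rw [h0, M_zero, sup_bot_eq]
      have hass : Associated (a 0) (gcdAux a) := by
        rw [show gcdAux a = gcd (a 0) (gcdAux (a ∘ Fin.succ)) from rfl, h0]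
        exact (gcd_zero_right' (a 0)).symm
      rw [M_assoc hass, natDegree_eq_of_associated hass.symm (ha 0)]
    | succ s' =>
      have hG : gcdAux (a ∘ Fin.succ) ≠ 0 :=
        gcdAux_ne_zero (a ∘ Fin.succ) (fun i => ha i.succ)
      have hdvd : lcm (a 0) (gcdAux (a ∘ Fin.succ)) ∣ lcm (a 0) (a (Fin.succ 0)) :=
        lcm_dvd_lcm dvd_rfl (gcdAux_dvd (a ∘ Fin.succ) 0)
      have hlne : lcm (a 0) (a (Fin.succ 0)) ≠ 0 := fun h0 => by
        rcases (lcm_eq_zero_iff _ _).mp h0 with h | h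
        · exact ha 0 h
        · exact ha (Fin.succ 0) h
      have hlcm' : ((lcm (a 0) (gcdAux (a ∘ Fin.succ))).natDegree : ℤ) ≤ d + 1 := by
        have h1 := natDegree_le_of_dvd hdvd hlne
        have h2 := hlcm 0 (Fin.succ 0)
        omega
      rw [pair (a 0) (gcdAux (a ∘ Fin.succ)) (ha 0) hG d hlcm']
      rfl

lemma cond_iff (d : ℤ) {e x : k[X]} (he : e ≠ 0) :
    (x = 0 ∨ ((x.natDegree : ℤ) + e.natDegree ≤ d))
      ↔ x.degree < ((nn d e.natDegree : ℕ) : WithBot ℕ) := by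
  rcases eq_or_ne x 0 with rfl | hx
  · exact iff_of_true (Or.inl rfl)
      (mem_degreeLT.mp ((degreeLT k (nn d e.natDegree)).zero_mem))
  · rw [← natDegree_lt_iff_degree_lt hx, or_iff_right hx]
    simp only [nn]
    omega

end EffectiveEuclidAux

open EffectiveEuclidAux Polynomial in
/-- Effective Euclidean algorithm for polynomials. -/
theorem effective_euclid {k : Type*} [Field k] {s : ℕ} (a : Fin s → Polynomial k)
    (ha : ∀ i, a i ≠ 0) (g : Polynomial k)
    (hg_dvd : ∀ i, g ∣ a i) (hg_gcd : ∀ h : Polynomial k, (∀ i, h ∣ a i) → h ∣ g)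
    (d : ℤ)
    (hd : ∀ i j, ∀ l : Polynomial k,
      (a i ∣ l ∧ a j ∣ l ∧ ∀ l' : Polynomial k, a i ∣ l' → a j ∣ l' → l ∣ l') →
      (l.natDegree : ℤ) ≤ d + 1) :
    {p : Polynomial k | ∃ x : Fin s → Polynomial k,
        (∀ i, x i = 0 ∨ ((x i).natDegree : ℤ) + (a i).natDegree ≤ d) ∧ p = ∑ i, a i * x i}
      = {p : Polynomial k | ∃ b : Polynomial k,
          (b = 0 ∨ ((b.natDegree : ℤ) + g.natDegree ≤ d)) ∧ p = g * b} := by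
  have hassoc : Associated g (gcdAux a) :=
    associated_of_dvd_dvd (dvd_gcdAux a g hg_dvd) (hg_gcd _ (gcdAux_dvd a))
  cases s with
  | zero =>
    have hg0 : g = 0 := by
      obtain ⟨u, hu⟩ := hassoc.symm
      rw [← hu, show (gcdAux a : Polynomial k) = 0 from rfl, zero_mul]
    ext p
    simp only [Set.mem_setOf_eq]
    constructor
    · rintro ⟨x, _, rfl⟩
      exact ⟨0, Or.inl rfl, by simp⟩
    · rintro ⟨b, _, rfl⟩
      exact ⟨fun _ => 0, fun i => Or.inl rfl, by simp [hg0]⟩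
  | succ s' =>
    have hg : g ≠ 0 := fun h0 => ha 0 (zero_dvd_iff.mp (h0 ▸ hg_dvd 0))
    have hG : gcdAux a ≠ 0 := gcdAux_ne_zero a ha
    have hlcm : ∀ i j, ((lcm (a i) (a j)).natDegree : ℤ) ≤ d + 1 := fun i j =>
      hd i j (lcm (a i) (a j))
        ⟨dvd_lcm_left _ _, dvd_lcm_right _ _, fun l' h1 h2 => lcm_dvd h1 h2⟩
    have key : (⨆ i, M (a i) (nn d (a i).natDegree)) = M g (nn d g.natDegree) := by
      rw [main_aux d _ a ha hlcm, ← M_assoc hassoc,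
        natDegree_eq_of_associated hassoc hG]
    ext p
    simp only [Set.mem_setOf_eq]
    constructor
    · rintro ⟨x, hx, rfl⟩
      have hmem : (∑ i, a i * x i) ∈ M g (nn d g.natDegree) := by
        rw [← key]
        refine Submodule.sum_mem _ fun i _ => ?_
        exact le_iSup (fun i => M (a i) (nn d (a i).natDegree)) i
          (mem_M.mpr ⟨x i, (cond_iff d (ha i)).mp (hx i), rfl⟩)
      obtain ⟨b, hb, hbeq⟩ := mem_M.mp hmem
      exact ⟨b, (cond_iff d hg).mpr hb, hbeq⟩
    · rintro ⟨b, hb, rfl⟩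
      have hmem : g * b ∈ (⨆ i, M (a i) (nn d (a i).natDegree)) := by
        rw [key]
        exact mem_M.mpr ⟨b, (cond_iff d hg).mp hb, rfl⟩
      rw [Submodule.mem_iSup_iff_exists_finsupp] at hmem
      obtain ⟨f, hf, hsum⟩ := hmem
      choose x hx1 hx2 using fun i => mem_M.mp (hf i)
      refine ⟨x, fun i => (cond_iff d (ha i)).mpr (hx1 i), ?_⟩
      rw [← hsum, Finsupp.sum_fintype _ _ (fun i => rfl)]
      exact Finset.sum_congr rfl fun i _ => hx2 i
end

section
/- Define Eff(σ) for signature σ = (0; 2,3,7; 0) as the set of nonnegative integers d with -2d + ⌊d/2⌋ + ⌊2d/3⌋ + ⌊6d/7⌋ ≥ 0. Then Eff(σ) is exactly the submonoid of (ℤ_{≥0}, +) generated by 6, 14, 21, and the smallest integer s such that Eff(σ) ⊇ ℤ_{≥ s} is s = 44. -/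
/-! Since `1/2 + 2/3 + 6/7 = 2 + 1/42`, writing each floor as a quotient plus a remainder gives
`deg ⌊dD⌋ = (d - R d) / 42` with `R d = 21 (d mod 2) + 14 (2d mod 3) + 6 (6d mod 7)`, so `d` is
effective iff `R d ≤ d`. In that case `d = 21 (d mod 2) + 14 (2d mod 3) + 6 (6d mod 7) + 42 k`
is a combination of the generators; conversely effectivity is closed under addition because
floors are superadditive. As `R d ≡ d [MOD 42]` and `R d ≤ 85`, the inequality `R d ≤ d` can
fail above `42` only when `R d = d + 42`, i.e. at `d = 43`. -/

namespace EffMonoid237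

def eff : AddSubmonoid ℕ where
  carrier := {d | 2 * d ≤ d / 2 + 2 * d / 3 + 6 * d / 7}
  zero_mem' := by simp
  add_mem' {a b} ha hb := by
    have h₂ := Nat.div_add_div_le_add_div (x := a) (y := b) (z := 2)
    have h₃ := Nat.div_add_div_le_add_div (x := 2 * a) (y := 2 * b) (z := 3)
    have h₇ := Nat.div_add_div_le_add_div (x := 6 * a) (y := 6 * b) (z := 7)
    simp only [Set.mem_ofPred_eq, mul_add] at *
    omega

theorem mem_eff {d : ℕ} : d ∈ eff ↔ 2 * d ≤ d / 2 + 2 * d / 3 + 6 * d / 7 := by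
  rfl

theorem floor_sum_add_residue (d : ℕ) :
    42 * (d / 2 + 2 * d / 3 + 6 * d / 7) + (21 * (d % 2) + 14 * (2 * d % 3) + 6 * (6 * d % 7))
      = 85 * d := by
  omega

theorem mem_eff_iff {d : ℕ} :
    d ∈ eff ↔ 21 * (d % 2) + 14 * (2 * d % 3) + 6 * (6 * d % 7) ≤ d := by
  have := floor_sum_add_residue d
  rw [mem_eff]
  omega

theorem closure_le_eff : AddSubmonoid.closure ({6, 14, 21} : Set ℕ) ≤ eff := by
  rw [AddSubmonoid.closure_le]
  rintro _ (rfl | rfl | rfl) <;> simp [mem_eff_iff]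

theorem eff_le_closure : eff ≤ AddSubmonoid.closure ({6, 14, 21} : Set ℕ) := by
  intro d hd
  rw [mem_eff_iff] at hd
  obtain ⟨k, hk⟩ : 42 ∣ d - (21 * (d % 2) + 14 * (2 * d % 3) + 6 * (6 * d % 7)) := by omega
  have decomposition : d = (6 * d % 7 + 7 * k) • 6 + (2 * d % 3) • 14 + (d % 2) • 21 := by
    simp only [smul_eq_mul]
    omega
  rw [decomposition]
  refine add_mem (add_mem (nsmul_mem ?_ _) (nsmul_mem ?_ _)) (nsmul_mem ?_ _) <;>
    exact AddSubmonoid.subset_closure (by simp)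

theorem mem_eff_of_forty_four_le {n : ℕ} (hn : 44 ≤ n) : n ∈ eff :=
  mem_eff_iff.2 (by omega)

theorem forty_three_not_mem_eff : 43 ∉ eff := by
  simp [mem_eff_iff]

end EffMonoid237

/-- For signature `(0; 2,3,7; 0)`, the effective monoid
`Eff = {d : -2d + ⌊d/2⌋ + ⌊2d/3⌋ + ⌊6d/7⌋ ≥ 0}` is the submonoid of `ℤ≥0` generated by
`6, 14, 21`, and its saturation (least `s` with `ℤ≥s ⊆ Eff`) is `44`. -/
theorem eff_monoid_237 :
    ({d : ℕ | 2 * d ≤ d / 2 + 2 * d / 3 + 6 * d / 7} : Set ℕ)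
        = (AddSubmonoid.closure ({6, 14, 21} : Set ℕ) : Set ℕ) ∧
      IsLeast {s : ℕ | ∀ n : ℕ, s ≤ n → 2 * n ≤ n / 2 + 2 * n / 3 + 6 * n / 7} 44 := by
  refine ⟨?_, fun n hn => ?_, fun s hs => ?_⟩
  · exact congrArg SetLike.coe
      (le_antisymm EffMonoid237.eff_le_closure EffMonoid237.closure_le_eff)
  · exact EffMonoid237.mem_eff.1 (EffMonoid237.mem_eff_of_forty_four_le hn)
  · by_contra! hs_lt
    exact EffMonoid237.forty_three_not_mem_eff (hs 43 (by omega))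
end

section
/- Define Eff = { d ∈ ℤ_{≥0} : -2d + ⌊d/2⌋ + ⌊2d/3⌋ + ⌊8d/9⌋ ≥ 0 }. Then Eff is the submonoid of (ℤ_{≥0}, +) generated by 6, 8, 9, and its saturation (the least s with ℤ_{≥ s} ⊆ Eff) equals 20. -/
private lemma exists_rep_689 : ∀ n : ℕ, 2 * n ≤ n / 2 + 2 * n / 3 + 8 * n / 9 →
    ∃ a b c : ℕ, n = 6 * a + 8 * b + 9 * c := by
  intro n
  induction n using Nat.strong_induction_on with
  | _ n ih =>
    intro hn
    by_cases h : n ≤ 25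
    · interval_cases n
      all_goals try (exfalso; omega)
      · exact ⟨0, 0, 0, by norm_num⟩
      · exact ⟨1, 0, 0, by norm_num⟩
      · exact ⟨0, 1, 0, by norm_num⟩
      · exact ⟨0, 0, 1, by norm_num⟩
      · exact ⟨2, 0, 0, by norm_num⟩
      · exact ⟨1, 1, 0, by norm_num⟩
      · exact ⟨1, 0, 1, by norm_num⟩
      · exact ⟨0, 2, 0, by norm_num⟩
      · exact ⟨0, 1, 1, by norm_num⟩
      · exact ⟨0, 0, 2, by norm_num⟩
      · exact ⟨2, 1, 0, by norm_num⟩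
      · exact ⟨2, 0, 1, by norm_num⟩
      · exact ⟨1, 2, 0, by norm_num⟩
      · exact ⟨1, 1, 1, by norm_num⟩
      · exact ⟨4, 0, 0, by norm_num⟩
      · exact ⟨0, 2, 1, by norm_num⟩
    · obtain ⟨a, b, c, hab⟩ := ih (n - 6) (by omega) (by omega)
      exact ⟨a + 1, b, c, by omega⟩

/-- For signature `(0; 2,3,9; 0)`, the effective monoid
`Eff = {d : -2d + ⌊d/2⌋ + ⌊2d/3⌋ + ⌊8d/9⌋ ≥ 0}` is the submonoid of `ℤ≥0` generated by
`6, 8, 9`, and its saturation (least `s` with `ℤ≥s ⊆ Eff`) is `20`. -/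
theorem eff_monoid_239 :
    ({d : ℕ | 2 * d ≤ d / 2 + 2 * d / 3 + 8 * d / 9} : Set ℕ)
        = (AddSubmonoid.closure ({6, 8, 9} : Set ℕ) : Set ℕ) ∧
      IsLeast {s : ℕ | ∀ n : ℕ, s ≤ n → 2 * n ≤ n / 2 + 2 * n / 3 + 8 * n / 9} 20 := by
  have h6 : (6 : ℕ) ∈ AddSubmonoid.closure ({6, 8, 9} : Set ℕ) :=
    AddSubmonoid.subset_closure (by simp)
  have h8 : (8 : ℕ) ∈ AddSubmonoid.closure ({6, 8, 9} : Set ℕ) :=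
    AddSubmonoid.subset_closure (by simp)
  have h9 : (9 : ℕ) ∈ AddSubmonoid.closure ({6, 8, 9} : Set ℕ) :=
    AddSubmonoid.subset_closure (by simp)
  constructor
  · apply Set.Subset.antisymm
    · intro d hd
      obtain ⟨a, b, c, rfl⟩ := exists_rep_689 d hd
      have key : ∀ (k : ℕ) (x : ℕ), x ∈ AddSubmonoid.closure ({6, 8, 9} : Set ℕ) →
          k * x ∈ AddSubmonoid.closure ({6, 8, 9} : Set ℕ) := by
        intro k x hx
        simpa [smul_eq_mul] using nsmul_mem hx k
      rw [mul_comm 6 a, mul_comm 8 b, mul_comm 9 c]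
      exact add_mem (add_mem (key a 6 h6) (key b 8 h8)) (key c 9 h9)
    · intro d hd
      refine AddSubmonoid.closure_induction (fun x hx => ?_) (by simp) ?_ hd
      · simp only [Set.mem_insert_iff, Set.mem_singleton_iff] at hx
        rcases hx with rfl | rfl | rfl <;> simp [Set.mem_setOf_eq]
      · intro x y _ _ hx hy
        simp only [Set.mem_setOf_eq] at *
        have h1 := Nat.add_div_le_add_div x y 2
        have h2 := Nat.add_div_le_add_div (2 * x) (2 * y) 3
        have h3 := Nat.add_div_le_add_div (8 * x) (8 * y) 9
        have e2 : 2 * (x + y) = 2 * x + 2 * y := by ring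
        have e8 : 8 * (x + y) = 8 * x + 8 * y := by ring
        rw [e2, e8]
        omega
  · constructor
    · intro n hn
      omega
    · intro s hs
      by_contra h
      have h19 := hs 19 (by omega)
      omega
end

section
/- Define Eff = { d ∈ ℤ_{≥0} : -2d + ⌊d/2⌋ + ⌊3d/4⌋ + ⌊4d/5⌋ ≥ 0 }. Then Eff is the submonoid of ℤ_{≥0} generated by 4, 10, 15, and its saturation equals 22. -/
/-! Floors are superadditive, so the defining inequality of `Eff` is stable under addition and
`Eff` is a submonoid; it contains `4`, `10` and `15`. Conversely, every `d ≥ 22` is `4a` plus one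
of `0, 10, 15, 25` according to `d mod 4`, and below `22` the two sets are compared directly.
Finally `21 ∉ Eff`, so `22` is the saturation. -/

theorem AddSubmonoid.mem_closure_triple {A : Type*} [AddCommMonoid A] (a b c x : A) :
    x ∈ AddSubmonoid.closure ({a, b, c} : Set A) ↔
      ∃ l m n : ℕ, l • a + m • b + n • c = x := by
  rw [← Set.singleton_union, AddSubmonoid.closure_union, mem_sup]
  simp_rw [mem_closure_singleton, mem_closure_pair, add_assoc]
  constructor
  · rintro ⟨_, ⟨l, rfl⟩, _, ⟨m, n, rfl⟩, rfl⟩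
    exact ⟨l, m, n, rfl⟩
  · rintro ⟨l, m, n, rfl⟩
    exact ⟨_, ⟨l, rfl⟩, _, ⟨m, n, rfl⟩, rfl⟩

def eff245 : AddSubmonoid ℕ where
  carrier := {d | 2 * d ≤ d / 2 + 3 * d / 4 + 4 * d / 5}
  zero_mem' := Set.mem_ofPred.2 le_rfl
  add_mem' {a b} ha hb := by
    have h2 : a / 2 + b / 2 ≤ (a + b) / 2 := by omega
    have h3 : 3 * a / 4 + 3 * b / 4 ≤ 3 * (a + b) / 4 := by omega
    have h4 : 4 * a / 5 + 4 * b / 5 ≤ 4 * (a + b) / 5 := by omega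
    simp only [Set.mem_ofPred] at *
    omega

theorem mem_eff245 {d : ℕ} : d ∈ eff245 ↔ 2 * d ≤ d / 2 + 3 * d / 4 + 4 * d / 5 := by rfl

theorem closure_le_eff245 : AddSubmonoid.closure ({4, 10, 15} : Set ℕ) ≤ eff245 :=
  AddSubmonoid.closure_le.2 <| by simp [Set.insert_subset_iff, mem_eff245]

theorem mem_closure_of_twentytwo_le {d : ℕ} (hd : 22 ≤ d) :
    d ∈ AddSubmonoid.closure ({4, 10, 15} : Set ℕ) := by
  rw [AddSubmonoid.mem_closure_triple]
  simp only [smul_eq_mul]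
  obtain h | h | h | h : d % 4 = 0 ∨ d % 4 = 1 ∨ d % 4 = 2 ∨ d % 4 = 3 := by omega
  · exact ⟨d / 4, 0, 0, by omega⟩
  · exact ⟨(d - 25) / 4, 1, 1, by omega⟩
  · exact ⟨(d - 10) / 4, 1, 0, by omega⟩
  · exact ⟨(d - 15) / 4, 0, 1, by omega⟩

theorem exists_repr_of_mem_eff245_of_lt_twentytwo :
    ∀ d < 22, d ∈ eff245 → ∃ l < 6, ∃ m < 3, ∃ n < 2, 4 * l + 10 * m + 15 * n = d := by
  simp only [mem_eff245]
  decide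

theorem eff245_eq_closure : eff245 = AddSubmonoid.closure ({4, 10, 15} : Set ℕ) := by
  refine le_antisymm (fun d hd => ?_) closure_le_eff245
  rcases lt_or_ge d 22 with hlt | hge
  · obtain ⟨l, -, m, -, n, -, rfl⟩ := exists_repr_of_mem_eff245_of_lt_twentytwo d hlt hd
    exact (AddSubmonoid.mem_closure_triple _ _ _ _).2
      ⟨l, m, n, by simp only [smul_eq_mul, mul_comm]⟩
  · exact mem_closure_of_twentytwo_le hge

/-- For signature `(0; 2,4,5; 0)`, the effective monoid
`Eff = {d : -2d + ⌊d/2⌋ + ⌊3d/4⌋ + ⌊4d/5⌋ ≥ 0}` is the submonoid of `ℤ≥0` generated by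
`4, 10, 15`, and its saturation (least `s` with `ℤ≥s ⊆ Eff`) is `22`. -/
theorem eff_monoid_245 :
    ({d : ℕ | 2 * d ≤ d / 2 + 3 * d / 4 + 4 * d / 5} : Set ℕ)
        = (AddSubmonoid.closure ({4, 10, 15} : Set ℕ) : Set ℕ) ∧
      IsLeast {s : ℕ | ∀ n : ℕ, s ≤ n → 2 * n ≤ n / 2 + 3 * n / 4 + 4 * n / 5} 22 := by
  refine ⟨Set.ext fun d => by rw [Set.mem_ofPred, ← mem_eff245, eff245_eq_closure]; rfl,
    ?_, fun s hs => ?_⟩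
  · intro n hn
    rw [← mem_eff245, eff245_eq_closure]
    exact mem_closure_of_twentytwo_le hn
  · by_contra! hs22
    exact absurd (hs 21 (by omega)) (by norm_num)
end

section
/- Let X be a smooth projective curve of genus 1 over an algebraically closed field, and let D, D' be effective divisors on X with deg D ≥ deg D'. Then the multiplication map H⁰(X, D) ⊗ H⁰(X, D') → H⁰(X, D + D') fails to be surjective if and only if either deg D' = 1, or deg D = deg D' = 2 and D is linearly equivalent to D'. -/
/-- A closed point of a smooth projective curve over `k` with function field `F`,
modeled as a normalized discrete valuation `ord : F → ℤ` (order of vanishing) that is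
trivial on `k`, with the junk convention `ord 0 = 0`. -/
structure Place (k F : Type*) [Field k] [Field F] [Algebra k F] where
  ord : F → ℤ
  ord_zero : ord 0 = 0
  ord_mul : ∀ {x y : F}, x ≠ 0 → y ≠ 0 → ord (x * y) = ord x + ord y
  min_le_ord_add : ∀ {x y : F}, x ≠ 0 → y ≠ 0 → x + y ≠ 0 → min (ord x) (ord y) ≤ ord (x + y)
  ord_algebraMap : ∀ {c : k}, c ≠ 0 → ord (algebraMap k F c) = 0
  exists_uniformizer : ∃ x : F, x ≠ 0 ∧ ord x = 1

/-- The degree of a divisor (a finitely supported `ℤ`-valued function on places). -/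
def divDeg {k F : Type*} [Field k] [Field F] [Algebra k F]
    (D : Place k F →₀ ℤ) : ℤ :=
  D.sum fun _ n => n

/-- The Riemann–Roch space `H⁰(X, D) = L(D) = {f ∈ F : div f + D ≥ 0} ∪ {0}`,
realized as the `k`-span of its nonzero elements. -/
def RRSpace (k F : Type*) [Field k] [Field F] [Algebra k F]
    (D : Place k F →₀ ℤ) : Submodule k F :=
  Submodule.span k {f : F | f ≠ 0 ∧ ∀ P : Place k F, -(D P) ≤ P.ord f}

namespace RRAux

open Module Submodule Finsupp

variable {k F : Type*} [Field k] [Field F] [Algebra k F]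

lemma ord_one (P : Place k F) : P.ord 1 = 0 := by
  have := P.ord_algebraMap (c := 1) one_ne_zero
  simpa using this

lemma ord_inv (P : Place k F) {x : F} (hx : x ≠ 0) : P.ord x⁻¹ = -P.ord x := by
  have h := P.ord_mul hx (inv_ne_zero hx)
  rw [mul_inv_cancel₀ hx, ord_one] at h
  omega

lemma divDeg_add (A B : Place k F →₀ ℤ) : divDeg (A + B) = divDeg A + divDeg B :=
  Finsupp.sum_add_index' (fun _ => rfl) (fun _ _ _ => rfl)

lemma divDeg_sub (A B : Place k F →₀ ℤ) : divDeg (A - B) = divDeg A - divDeg B :=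
  Finsupp.sum_sub_index (fun _ _ _ => rfl)

lemma divDeg_single (P : Place k F) (n : ℤ) : divDeg (Finsupp.single P n) = n :=
  Finsupp.sum_single_index rfl

lemma effective_deg_zero {C : Place k F →₀ ℤ} (h : ∀ P, 0 ≤ C P) (h0 : divDeg C = 0) :
    C = 0 := by
  have hz := (Finset.sum_eq_zero_iff_of_nonneg (fun P _ => h P)).1 h0
  ext P
  by_cases hP : P ∈ C.support
  · exact hz P hP
  · simpa using Finsupp.notMem_support_iff.mp hP

lemma divDeg_nonneg {C : Place k F →₀ ℤ} (h : ∀ P, 0 ≤ C P) : 0 ≤ divDeg C :=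
  Finset.sum_nonneg fun P _ => h P

lemma apply_le_divDeg {C : Place k F →₀ ℤ} (h : ∀ P, 0 ≤ C P) (P : Place k F) :
    C P ≤ divDeg C := by
  by_cases hP : P ∈ C.support
  · exact Finset.single_le_sum (fun Q _ => h Q) hP
  · have : C P = 0 := Finsupp.notMem_support_iff.mp hP
    rw [this]; exact divDeg_nonneg h

lemma exists_pos {C : Place k F →₀ ℤ} (h : ∀ P, 0 ≤ C P) (h1 : 1 ≤ divDeg C) :
    ∃ P, 1 ≤ C P := by
  by_contra hP
  push_neg at hP
  have : C = 0 := by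
    ext P; simp only [Finsupp.coe_zero, Pi.zero_apply]; have := h P; have := hP P; omega
  rw [this] at h1
  simp [divDeg] at h1

lemma effective_deg_one {C : Place k F →₀ ℤ} (h : ∀ P, 0 ≤ C P) (h1 : divDeg C = 1) :
    ∃ Q, C = Finsupp.single Q 1 := by
  classical
  obtain ⟨Q, hQ⟩ := exists_pos h (by omega)
  refine ⟨Q, ?_⟩
  have heff : ∀ P, 0 ≤ (C - Finsupp.single Q 1 : Place k F →₀ ℤ) P := by
    intro P
    rw [Finsupp.sub_apply, Finsupp.single_apply]
    split <;> [(rename_i hh; subst hh; omega); (have := h P; omega)]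
  have hz : C - Finsupp.single Q 1 = 0 :=
    effective_deg_zero heff (by rw [divDeg_sub, divDeg_single]; omega)
  have := sub_eq_zero.mp hz
  exact this

lemma exists_pair {C : Place k F →₀ ℤ} (h : ∀ P, 0 ≤ C P) (h2 : 2 ≤ divDeg C) :
    ∃ P Q, ∀ R, (Finsupp.single P 1 + Finsupp.single Q 1 : Place k F →₀ ℤ) R ≤ C R := by
  classical
  obtain ⟨P, hP⟩ := exists_pos h (by omega)
  have heff : ∀ R, 0 ≤ (C - Finsupp.single P 1 : Place k F →₀ ℤ) R := by
    intro R
    rw [Finsupp.sub_apply, Finsupp.single_apply]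
    split <;> [(rename_i hh; subst hh; omega); (have := h R; omega)]
  obtain ⟨Q, hQ⟩ := exists_pos heff (by rw [divDeg_sub, divDeg_single]; omega)
  rw [Finsupp.sub_apply, Finsupp.single_apply] at hQ
  refine ⟨P, Q, fun R => ?_⟩
  rw [Finsupp.add_apply, Finsupp.single_apply, Finsupp.single_apply]
  have hR := h R
  by_cases hPR : P = R <;> by_cases hQR : Q = R <;> by_cases hQP : P = Q <;>
    simp_all <;> omega

/-- Membership condition for `RRSpace`. -/
def RRCond (D : Place k F →₀ ℤ) (x : F) : Prop :=
  x ≠ 0 → ∀ P : Place k F, -(D P) ≤ P.ord x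

/-- The full Riemann-Roch space as a submodule defined by the valuation conditions. -/
def RRFull (D : Place k F →₀ ℤ) : Submodule k F where
  carrier := {x | RRCond D x}
  zero_mem' := fun h => absurd rfl h
  add_mem' := by
    intro x y hx hy hxy P
    rcases eq_or_ne x 0 with rfl | hx0
    · rw [zero_add] at hxy ⊢
      exact hy hxy P
    rcases eq_or_ne y 0 with rfl | hy0
    · rw [add_zero] at hxy ⊢
      exact hx hxy P
    · exact le_trans (le_min (hx hx0 P) (hy hy0 P)) (P.min_le_ord_add hx0 hy0 hxy)
  smul_mem' := by
    intro c x hx hcx P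
    have hc : c ≠ 0 := by rintro rfl; simp at hcx
    have hx0 : x ≠ 0 := by rintro rfl; simp at hcx
    have halg : algebraMap k F c ≠ 0 := fun hh => hc (by
      have := (algebraMap k F).injective (by simpa using hh)
      simpa using this)
    rw [Algebra.smul_def, P.ord_mul halg hx0, P.ord_algebraMap hc, zero_add]
    exact hx hx0 P

lemma mem_RRSpace_iff {D : Place k F →₀ ℤ} {x : F} :
    x ∈ RRSpace k F D ↔ RRCond D x := by
  constructor
  · intro hx
    have hle : RRSpace k F D ≤ RRFull D := by
      rw [RRSpace, Submodule.span_le]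
      rintro f ⟨hf0, hf⟩
      exact fun _ => hf
    exact hle hx
  · intro h
    rcases eq_or_ne x 0 with rfl | hx0
    · exact zero_mem _
    · exact Submodule.subset_span ⟨hx0, h hx0⟩

lemma mem_RRSpace_of {D : Place k F →₀ ℤ} {x : F}
    (h : ∀ P : Place k F, -(D P) ≤ P.ord x) : x ∈ RRSpace k F D :=
  mem_RRSpace_iff.mpr fun _ => h

lemma ord_ge_of_mem {D : Place k F →₀ ℤ} {x : F} (hx : x ∈ RRSpace k F D) (hx0 : x ≠ 0)
    (P : Place k F) : -(D P) ≤ P.ord x :=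
  mem_RRSpace_iff.mp hx hx0 P

lemma RRSpace_mono {A B : Place k F →₀ ℤ} (h : ∀ P, A P ≤ B P) :
    RRSpace k F A ≤ RRSpace k F B := by
  intro x hx
  rw [mem_RRSpace_iff] at hx ⊢
  intro hx0 P
  have := hx hx0 P
  have := h P
  omega

lemma one_mem_RRSpace {D : Place k F →₀ ℤ} (h : ∀ P, 0 ≤ D P) :
    (1 : F) ∈ RRSpace k F D :=
  mem_RRSpace_of fun P => by rw [ord_one]; have := h P; omega

lemma mul_mem_RRSpace {A B : Place k F →₀ ℤ} {x y : F}
    (hx : x ∈ RRSpace k F A) (hy : y ∈ RRSpace k F B) :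
    x * y ∈ RRSpace k F (A + B) := by
  rw [mem_RRSpace_iff]
  intro hxy P
  have hx0 : x ≠ 0 := fun h => hxy (by simp [h])
  have hy0 : y ≠ 0 := fun h => hxy (by simp [h])
  rw [P.ord_mul hx0 hy0, Finsupp.add_apply]
  have := ord_ge_of_mem hx hx0 P
  have := ord_ge_of_mem hy hy0 P
  omega

lemma notMem_RRSpace {D : Place k F →₀ ℤ} {x : F} (hx0 : x ≠ 0) {P : Place k F}
    (h : P.ord x < -(D P)) : x ∉ RRSpace k F D := by
  intro hx
  have := ord_ge_of_mem hx hx0 P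
  omega

lemma exists_nonzero_of_finrank_pos {W : Submodule k F} (h : 0 < Module.finrank k W) :
    ∃ x ∈ W, x ≠ 0 := by
  by_contra hW
  push_neg at hW
  have : W = ⊥ := by
    rw [Submodule.eq_bot_iff]
    exact hW
  rw [this, finrank_bot] at h
  omega

lemma finrank_le_of_le {s t : Submodule k F} [FiniteDimensional k t] (h : s ≤ t) :
    Module.finrank k s ≤ Module.finrank k t := by
  rcases h.lt_or_eq with h | h
  · exact (Submodule.finrank_lt_finrank_of_lt h).le
  · rw [h]

section Genus1

variable (hgenus1 : ∀ D : Place k F →₀ ℤ, 1 ≤ divDeg D →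
    (Module.finrank k (RRSpace k F D) : ℤ) = divDeg D)

include hgenus1

lemma findim_RR {E : Place k F →₀ ℤ} (h : 1 ≤ divDeg E) :
    FiniteDimensional k (RRSpace k F E) := by
  apply FiniteDimensional.of_finrank_pos
  have := hgenus1 E h
  omega

/-- In `L(E)` with `deg E ≥ 2` there is an element with exact pole order at any given place. -/
lemma exists_exact {E : Place k F →₀ ℤ} (P : Place k F) (h2 : 2 ≤ divDeg E) :
    ∃ x : F, x ≠ 0 ∧ x ∈ RRSpace k F E ∧ P.ord x = -(E P) := by
  classical
  set E' := E - Finsupp.single P 1 with hE'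
  have hE'app : ∀ R, E' R = E R - (if P = R then 1 else 0) := by
    intro R; rw [hE', Finsupp.sub_apply, Finsupp.single_apply]
  have hdE' : divDeg E' = divDeg E - 1 := by
    rw [hE', divDeg_sub, divDeg_single]
  have hne : ¬(RRSpace k F E ≤ RRSpace k F E') := by
    intro hle
    have hmono : RRSpace k F E' ≤ RRSpace k F E :=
      RRSpace_mono fun R => by rw [hE'app R]; split <;> omega
    have heq : RRSpace k F E' = RRSpace k F E := le_antisymm hmono hle
    have h1 := hgenus1 E (by omega)
    have h2' := hgenus1 E' (by omega)
    rw [heq] at h2'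
    omega
  obtain ⟨x, hxE, hxE'⟩ := SetLike.not_le_iff_exists.mp hne
  have hx0 : x ≠ 0 := by
    rintro rfl; exact hxE' (zero_mem _)
  refine ⟨x, hx0, hxE, ?_⟩
  have hord := ord_ge_of_mem hxE hx0 P
  by_contra hPx
  apply hxE'
  apply mem_RRSpace_of
  intro R
  rw [hE'app R]
  rcases eq_or_ne P R with rfl | hPR
  · simp only [if_true]
    omega
  · rw [if_neg hPR]
    have := ord_ge_of_mem hxE hx0 R
    omega

/-- Dimension-counting step: if `V` contains `L(E)` and an element of
`L(E + P) \ L(E)`, then `V` contains `L(E + P)`. -/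
lemma step_lemma {E : Place k F →₀ ℤ} {P : Place k F} (hE : 1 ≤ divDeg E)
    {V : Submodule k F} (hEV : RRSpace k F E ≤ V)
    {h : F} (hhV : h ∈ V) (hh1 : h ∈ RRSpace k F (E + Finsupp.single P 1))
    (hh2 : h ∉ RRSpace k F E) :
    RRSpace k F (E + Finsupp.single P 1) ≤ V := by
  classical
  set T := RRSpace k F (E + Finsupp.single P 1) with hT
  have hdT : divDeg (E + Finsupp.single P 1) = divDeg E + 1 := by
    rw [divDeg_add, divDeg_single]
  have hrT : (Module.finrank k T : ℤ) = divDeg E + 1 := by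
    rw [hT, hgenus1 _ (by omega), hdT]
  have hrE : (Module.finrank k (RRSpace k F E) : ℤ) = divDeg E := hgenus1 E hE
  haveI : FiniteDimensional k T := findim_RR hgenus1 (by omega)
  have hET : RRSpace k F E ≤ T := RRSpace_mono fun R => by
    rw [Finsupp.add_apply, Finsupp.single_apply]; split <;> omega
  have hlt : RRSpace k F E < V ⊓ T := by
    apply lt_of_le_of_ne (le_inf hEV hET)
    intro hcontra
    exact hh2 (hcontra ▸ (Submodule.mem_inf.mpr ⟨hhV, hh1⟩))
  haveI : FiniteDimensional k (V ⊓ T : Submodule k F) :=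
    Submodule.finiteDimensional_of_le inf_le_right
  have h1 : Module.finrank k (RRSpace k F E) < Module.finrank k (V ⊓ T : Submodule k F) :=
    Submodule.finrank_lt_finrank_of_lt hlt
  have h2 : Module.finrank k (V ⊓ T : Submodule k F) ≤ Module.finrank k T :=
    finrank_le_of_le inf_le_right
  have heq : V ⊓ T = T := by
    apply Submodule.eq_of_le_of_finrank_le inf_le_right
    omega
  calc T = V ⊓ T := heq.symm
    _ ≤ V := inf_le_left

end Genus1

section Genus1b

variable (hgenus1 : ∀ D : Place k F →₀ ℤ, 1 ≤ divDeg D →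
    (Module.finrank k (RRSpace k F D) : ℤ) = divDeg D)

include hgenus1

/-- Construction 1: a product with an exact extra pole at `P`, using a pair `P + Q ≤ D`
and an element of `L(D' - Q)` with exact pole at `P`. -/
lemma constr1 {D D' : Place k F →₀ ℤ}
    {P Q : Place k F}
    (hpair : ∀ R, (Finsupp.single P 1 + Finsupp.single Q 1 : Place k F →₀ ℤ) R ≤ D R)
    {g : F} (hg0 : g ≠ 0)
    (hgmem : g ∈ RRSpace k F (D' - Finsupp.single Q 1))
    (hgord : P.ord g = -((D' - Finsupp.single Q 1 : Place k F →₀ ℤ) P)) :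
    ∃ h : F, (∃ f' ∈ RRSpace k F D, ∃ g' ∈ RRSpace k F D', h = f' * g') ∧
      h ∈ RRSpace k F (D' + Finsupp.single P 1) ∧ h ∉ RRSpace k F D' := by
  classical
  set A : Place k F →₀ ℤ := Finsupp.single P 1 + Finsupp.single Q 1 with hA
  have hdA : divDeg A = 2 := by rw [hA, divDeg_add, divDeg_single, divDeg_single]; norm_num
  obtain ⟨f, hf0, hfA, hford⟩ := exists_exact hgenus1 P (by omega : 2 ≤ divDeg A)
  have hfD : f ∈ RRSpace k F D := RRSpace_mono hpair hfA
  have hgD' : g ∈ RRSpace k F D' := by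
    refine RRSpace_mono (fun R => ?_) hgmem
    rw [Finsupp.sub_apply, Finsupp.single_apply]
    split <;> omega
  refine ⟨f * g, ⟨f, hfD, g, hgD', rfl⟩, ?_, ?_⟩
  · have hmem := mul_mem_RRSpace hfA hgmem
    have heq : A + (D' - Finsupp.single Q 1) = D' + Finsupp.single P 1 := by
      rw [hA]; abel
    rwa [heq] at hmem
  · apply notMem_RRSpace (mul_ne_zero hf0 hg0)
    rw [P.ord_mul hf0 hg0, hford, hgord]
    have h1 : A P = 1 + (Finsupp.single Q 1 : Place k F →₀ ℤ) P := by
      rw [hA, Finsupp.add_apply, Finsupp.single_eq_same]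
    have h2 : (D' - Finsupp.single Q 1 : Place k F →₀ ℤ) P
        = D' P - (Finsupp.single Q 1 : Place k F →₀ ℤ) P := Finsupp.sub_apply _ _ _
    omega

/-- Construction 2: using a triple `P + Q₁ + Q₂ ≤ D` and a function `w` with
divisor `Q₁ + Q₂ - D'`. -/
lemma constr2 {D D' : Place k F →₀ ℤ}
    {P Q₁ Q₂ : Place k F}
    (htriple : ∀ R, (Finsupp.single P 1 + Finsupp.single Q₁ 1 + Finsupp.single Q₂ 1 :
      Place k F →₀ ℤ) R ≤ D R)
    {w : F} (hw0 : w ≠ 0)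
    (hword : ∀ R : Place k F,
      R.ord w = (Finsupp.single Q₁ 1 + Finsupp.single Q₂ 1 : Place k F →₀ ℤ) R - D' R) :
    ∃ h : F, (∃ f' ∈ RRSpace k F D, ∃ g' ∈ RRSpace k F D', h = f' * g') ∧
      h ∈ RRSpace k F (D' + Finsupp.single P 1) ∧ h ∉ RRSpace k F D' := by
  classical
  set B : Place k F →₀ ℤ := Finsupp.single Q₁ 1 + Finsupp.single Q₂ 1 with hB
  set A : Place k F →₀ ℤ := Finsupp.single P 1 + B with hA
  have hdA : divDeg A = 3 := by
    rw [hA, hB, divDeg_add, divDeg_add, divDeg_single, divDeg_single, divDeg_single]; norm_num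
  obtain ⟨f, hf0, hfA, hford⟩ := exists_exact hgenus1 P (by omega : 2 ≤ divDeg A)
  have htriple' : ∀ R, A R ≤ D R := by
    intro R
    have h := htriple R
    have hAeq : A = (Finsupp.single P 1 + Finsupp.single Q₁ 1) + Finsupp.single Q₂ 1 := by
      rw [hA, hB, add_assoc]
    rw [hAeq]
    exact h
  have hfD : f ∈ RRSpace k F D := RRSpace_mono htriple' hfA
  have hBnn : ∀ R, 0 ≤ B R := by
    intro R
    rw [hB, Finsupp.add_apply, Finsupp.single_apply, Finsupp.single_apply]
    split <;> split <;> omega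
  have hwD' : w ∈ RRSpace k F D' := mem_RRSpace_of fun R => by
    rw [hword R]; have := hBnn R; omega
  have hwB : w ∈ RRSpace k F (D' - B) := mem_RRSpace_of fun R => by
    rw [hword R, Finsupp.sub_apply]; omega
  refine ⟨f * w, ⟨f, hfD, w, hwD', rfl⟩, ?_, ?_⟩
  · have hmem := mul_mem_RRSpace hfA hwB
    have heq : A + (D' - B) = D' + Finsupp.single P 1 := by rw [hA]; abel
    rwa [heq] at hmem
  · apply notMem_RRSpace (mul_ne_zero hf0 hw0)
    rw [P.ord_mul hf0 hw0, hford, hword P]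
    have h1 : A P = 1 + B P := by rw [hA, Finsupp.add_apply, Finsupp.single_eq_same]
    omega

/-- The inductive claim: once the first step is done, `L(D' + C) ⊆ V` for all
effective `C ≤ D` containing `P₁`. -/
lemma claim {D D' : Place k F →₀ ℤ} (hD' : ∀ P, 0 ≤ D' P)
    (hn'2 : 2 ≤ divDeg D')
    {V : Submodule k F}
    (hVgen : ∀ f g : F, f ∈ RRSpace k F D → g ∈ RRSpace k F D' → f * g ∈ V)
    {P₁ : Place k F}
    (hfirst : RRSpace k F (D' + Finsupp.single P₁ 1) ≤ V) :
    ∀ m : ℕ, ∀ C : Place k F →₀ ℤ, (∀ R, 0 ≤ C R) → (∀ R, C R ≤ D R) →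
      1 ≤ C P₁ → divDeg C ≤ (m : ℤ) → RRSpace k F (D' + C) ≤ V := by
  classical
  intro m
  induction m with
  | zero =>
    intro C hC1 _ hC3 hC4
    exfalso
    have := apply_le_divDeg hC1 P₁
    simp only [Nat.cast_zero] at hC4
    omega
  | succ m ih =>
    intro C hC1 hC2 hC3 hC4
    by_cases hm : divDeg C ≤ (m : ℤ)
    · exact ih C hC1 hC2 hC3 hm
    have hdC : divDeg C = (m : ℤ) + 1 := by push_cast at hC4 ⊢; omega
    by_cases hone : divDeg C = 1
    · obtain ⟨Q, hQ⟩ := effective_deg_one hC1 hone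
      have hQP : Q = P₁ := by
        by_contra hne
        rw [hQ, Finsupp.single_apply, if_neg hne] at hC3
        omega
      rw [hQ, hQP]
      exact hfirst
    · have h2C : 2 ≤ divDeg C := by
        have := apply_le_divDeg hC1 P₁; omega
      have hchoice : ∃ P : Place k F, 1 ≤ C P ∧
          1 ≤ (C - Finsupp.single P 1 : Place k F →₀ ℤ) P₁ := by
        by_cases h2 : 2 ≤ C P₁
        · refine ⟨P₁, by omega, ?_⟩
          rw [Finsupp.sub_apply, Finsupp.single_eq_same]; omega
        · have heff : ∀ R, 0 ≤ (C - Finsupp.single P₁ 1 : Place k F →₀ ℤ) R := by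
            intro R
            rw [Finsupp.sub_apply, Finsupp.single_apply]
            split
            · rename_i hh; subst hh; omega
            · have := hC1 R; omega
          have hdegC' : 1 ≤ divDeg (C - Finsupp.single P₁ 1 : Place k F →₀ ℤ) := by
            rw [divDeg_sub, divDeg_single]; omega
          obtain ⟨P, hP⟩ := exists_pos heff hdegC'
          rw [Finsupp.sub_apply, Finsupp.single_apply] at hP
          have hPne : P₁ ≠ P := by
            intro hh; subst hh; rw [if_pos rfl] at hP; omega
          rw [if_neg hPne] at hP
          refine ⟨P, by omega, ?_⟩
          rw [Finsupp.sub_apply, Finsupp.single_apply]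
          rw [if_neg (fun hh => hPne hh.symm)]
          omega
      obtain ⟨P, hP, hP₁'⟩ := hchoice
      set C₀ : Place k F →₀ ℤ := C - Finsupp.single P 1 with hC₀
      have hC₀eff : ∀ R, 0 ≤ C₀ R := by
        intro R
        rw [hC₀, Finsupp.sub_apply, Finsupp.single_apply]
        split
        · rename_i hh; subst hh; omega
        · have := hC1 R; omega
      have hC₀le : ∀ R, C₀ R ≤ D R := by
        intro R
        rw [hC₀, Finsupp.sub_apply, Finsupp.single_apply]
        have h1 := hC2 R
        split <;> omega
      have hC₀deg : divDeg C₀ = divDeg C - 1 := by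
        rw [hC₀, divDeg_sub, divDeg_single]
      have hCC₀ : C₀ + Finsupp.single P 1 = C := sub_add_cancel _ _
      have hIH := ih C₀ hC₀eff hC₀le hP₁' (by omega)
      obtain ⟨f, hf0, hfC, hford⟩ := exists_exact hgenus1 (E := C) P h2C
      obtain ⟨g, hg0, hgD', hgord⟩ := exists_exact hgenus1 (E := D') P hn'2
      have hfD : f ∈ RRSpace k F D := RRSpace_mono hC2 hfC
      have hfgV : f * g ∈ V := hVgen f g hfD hgD'
      have hfg1 : f * g ∈ RRSpace k F (D' + C₀ + Finsupp.single P 1) := by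
        have hmem := mul_mem_RRSpace hfC hgD'
        have heqd : C + D' = D' + C₀ + Finsupp.single P 1 := by
          rw [← hCC₀]; abel
        rwa [heqd] at hmem
      have hfg2 : f * g ∉ RRSpace k F (D' + C₀) := by
        apply notMem_RRSpace (mul_ne_zero hf0 hg0)
        rw [P.ord_mul hf0 hg0, hford, hgord, Finsupp.add_apply]
        have hC₀P : C₀ P = C P - 1 := by
          rw [hC₀, Finsupp.sub_apply, Finsupp.single_eq_same]
        omega
      have hdeg' : 1 ≤ divDeg (D' + C₀) := by
        rw [divDeg_add]
        have := divDeg_nonneg hC₀eff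
        omega
      have hstep := step_lemma hgenus1 hdeg' hIH hfgV hfg1 hfg2
      have heq2 : D' + C₀ + Finsupp.single P 1 = D' + C := by
        rw [← hCC₀]; abel
      rwa [heq2] at hstep

end Genus1b

section Genus1c

variable (hgenus1 : ∀ D : Place k F →₀ ℤ, 1 ≤ divDeg D →
    (Module.finrank k (RRSpace k F D) : ℤ) = divDeg D)

include hgenus1

lemma first_step
    (hprin : ∀ f : F, f ≠ 0 → ∃ Df : Place k F →₀ ℤ,
      (∀ P : Place k F, Df P = P.ord f) ∧ divDeg Df = 0)
    {D D' : Place k F →₀ ℤ}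
    (hD : ∀ P, 0 ≤ D P) (hD' : ∀ P, 0 ≤ D' P)
    (hn'2 : 2 ≤ divDeg D') (hdeg : divDeg D' ≤ divDeg D)
    (hnotbad : ¬(divDeg D = 2 ∧ divDeg D' = 2 ∧
      ∃ f : F, f ≠ 0 ∧ ∀ P : Place k F, D' P = D P + P.ord f)) :
    ∃ (P₁ : Place k F) (h : F), 1 ≤ D P₁ ∧
      (∃ f' ∈ RRSpace k F D, ∃ g' ∈ RRSpace k F D', h = f' * g') ∧
      h ∈ RRSpace k F (D' + Finsupp.single P₁ 1) ∧ h ∉ RRSpace k F D' := by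
  classical
  have hD2 : 2 ≤ divDeg D := le_trans hn'2 hdeg
  by_cases hn'3 : 3 ≤ divDeg D'
  · -- use any pair of D and an exact element of L(D' - Q)
    obtain ⟨P, Q, hpair⟩ := exists_pair hD hD2
    have hdQ : 2 ≤ divDeg (D' - Finsupp.single Q 1 : Place k F →₀ ℤ) := by
      rw [divDeg_sub, divDeg_single]; omega
    obtain ⟨g, hg0, hgmem, hgord⟩ :=
      exists_exact hgenus1 (E := D' - Finsupp.single Q 1) P hdQ
    obtain ⟨h, hh1, hh2, hh3⟩ := constr1 hgenus1 hpair hg0 hgmem hgord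
    refine ⟨P, h, ?_, hh1, hh2, hh3⟩
    have := hpair P
    rw [Finsupp.add_apply, Finsupp.single_eq_same, Finsupp.single_apply] at this
    split at this <;> omega
  · have hn'2' : divDeg D' = 2 := by omega
    by_cases hgood : ∃ P Q : Place k F,
        (∀ R, (Finsupp.single P 1 + Finsupp.single Q 1 : Place k F →₀ ℤ) R ≤ D R) ∧
        ¬∃ w : F, w ≠ 0 ∧ ∀ R : Place k F,
          R.ord w = (Finsupp.single P 1 + Finsupp.single Q 1 : Place k F →₀ ℤ) R - D' R
    · obtain ⟨P, Q, hpair, hno⟩ := hgood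
      -- find a nonzero element of L(D' - Q); its divisor analysis gives exactness at P
      have hd1 : divDeg (D' - Finsupp.single Q 1 : Place k F →₀ ℤ) = 1 := by
        rw [divDeg_sub, divDeg_single]; omega
      have hfr : 0 < Module.finrank k (RRSpace k F (D' - Finsupp.single Q 1)) := by
        have := hgenus1 (D' - Finsupp.single Q 1) (by omega)
        omega
      obtain ⟨g₀, hg₀mem, hg₀0⟩ := exists_nonzero_of_finrank_pos hfr
      obtain ⟨Dg, hDg, hDgdeg⟩ := hprin g₀ hg₀0
      set Rdv : Place k F →₀ ℤ := Dg + (D' - Finsupp.single Q 1) with hRdv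
      have hRdveff : ∀ R, 0 ≤ Rdv R := by
        intro R
        rw [hRdv, Finsupp.add_apply]
        have h1 := ord_ge_of_mem hg₀mem hg₀0 R
        rw [← hDg R] at h1
        omega
      have hRdvdeg : divDeg Rdv = 1 := by
        rw [hRdv, divDeg_add, hDgdeg]; omega
      obtain ⟨S, hS⟩ := effective_deg_one hRdveff hRdvdeg
      have hSP : S ≠ P := by
        intro hh
        subst hh
        apply hno
        refine ⟨g₀, hg₀0, fun R => ?_⟩
        have hR : Rdv R = (Finsupp.single S 1 : Place k F →₀ ℤ) R := by rw [hS]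
        rw [hRdv, Finsupp.add_apply, Finsupp.sub_apply] at hR
        have hadd : (Finsupp.single S 1 + Finsupp.single Q 1 : Place k F →₀ ℤ) R
            = (Finsupp.single S 1 : Place k F →₀ ℤ) R
              + (Finsupp.single Q 1 : Place k F →₀ ℤ) R := Finsupp.add_apply _ _ _
        rw [← hDg R]
        omega
      have hgord : P.ord g₀ = -((D' - Finsupp.single Q 1 : Place k F →₀ ℤ) P) := by
        have hRP : Rdv P = (Finsupp.single S 1 : Place k F →₀ ℤ) P := by rw [hS]
        rw [Finsupp.single_apply, if_neg hSP] at hRP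
        rw [hRdv, Finsupp.add_apply] at hRP
        rw [← hDg P]
        omega
      obtain ⟨h, hh1, hh2, hh3⟩ := constr1 hgenus1 hpair hg₀0 hg₀mem hgord
      refine ⟨P, h, ?_, hh1, hh2, hh3⟩
      have := hpair P
      rw [Finsupp.add_apply, Finsupp.single_eq_same, Finsupp.single_apply] at this
      split at this <;> omega
    · push_neg at hgood
      by_cases hn2 : divDeg D ≤ 2
      · -- deg D = 2 : D itself is a pair, and it is equivalent to D' : contradiction
        exfalso
        obtain ⟨P, Q, hpair⟩ := exists_pair hD hD2
        have hDeq : D = Finsupp.single P 1 + Finsupp.single Q 1 := by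
          have heff : ∀ R, 0 ≤ (D - (Finsupp.single P 1 + Finsupp.single Q 1) :
              Place k F →₀ ℤ) R := by
            intro R
            rw [Finsupp.sub_apply]
            have := hpair R
            omega
          have hdeg0 : divDeg (D - (Finsupp.single P 1 + Finsupp.single Q 1) :
              Place k F →₀ ℤ) = 0 := by
            rw [divDeg_sub, divDeg_add, divDeg_single, divDeg_single]; omega
          have := effective_deg_zero heff hdeg0
          have := sub_eq_zero.mp this
          exact this
        obtain ⟨w, hw0, hword⟩ := hgood P Q (by rw [← hDeq]; intro R; exact le_refl _)
        apply hnotbad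
        refine ⟨by omega, hn'2', w⁻¹, inv_ne_zero hw0, fun R => ?_⟩
        rw [ord_inv R hw0, hword R, ← hDeq]
        omega
      · -- deg D ≥ 3 : use construction 2
        obtain ⟨P, hP⟩ := exists_pos hD (by omega)
        have heffD₀ : ∀ R, 0 ≤ (D - Finsupp.single P 1 : Place k F →₀ ℤ) R := by
          intro R
          rw [Finsupp.sub_apply, Finsupp.single_apply]
          split
          · rename_i hh; subst hh; omega
          · have := hD R; omega
        have hdegD₀ : 2 ≤ divDeg (D - Finsupp.single P 1 : Place k F →₀ ℤ) := by
          rw [divDeg_sub, divDeg_single]; omega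
        obtain ⟨Q₁, Q₂, hpair₀⟩ := exists_pair heffD₀ hdegD₀
        have hpairD : ∀ R, (Finsupp.single Q₁ 1 + Finsupp.single Q₂ 1 :
            Place k F →₀ ℤ) R ≤ D R := by
          intro R
          have h1 := hpair₀ R
          rw [Finsupp.sub_apply, Finsupp.single_apply] at h1
          split at h1 <;> omega
        obtain ⟨w, hw0, hword⟩ := hgood Q₁ Q₂ hpairD
        have htriple : ∀ R, (Finsupp.single P 1 + Finsupp.single Q₁ 1
            + Finsupp.single Q₂ 1 : Place k F →₀ ℤ) R ≤ D R := by
          intro R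
          have h1 := hpair₀ R
          rw [Finsupp.sub_apply] at h1
          have h2 : (Finsupp.single P 1 + Finsupp.single Q₁ 1 + Finsupp.single Q₂ 1 :
              Place k F →₀ ℤ) R = (Finsupp.single P 1 : Place k F →₀ ℤ) R
              + ((Finsupp.single Q₁ 1 + Finsupp.single Q₂ 1 : Place k F →₀ ℤ)) R := by
            rw [add_assoc, Finsupp.add_apply]
          omega
        obtain ⟨h, hh1, hh2, hh3⟩ := constr2 hgenus1 htriple hw0 hword
        exact ⟨P, h, hP, hh1, hh2, hh3⟩

end Genus1c

section Main

variable (hgenus1 : ∀ D : Place k F →₀ ℤ, 1 ≤ divDeg D →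
    (Module.finrank k (RRSpace k F D) : ℤ) = divDeg D)

include hgenus1

lemma surj
    (hprin : ∀ f : F, f ≠ 0 → ∃ Df : Place k F →₀ ℤ,
      (∀ P : Place k F, Df P = P.ord f) ∧ divDeg Df = 0)
    {D D' : Place k F →₀ ℤ}
    (hD : ∀ P, 0 ≤ D P) (hD' : ∀ P, 0 ≤ D' P)
    (hn'2 : 2 ≤ divDeg D') (hdeg : divDeg D' ≤ divDeg D)
    (hnotbad : ¬(divDeg D = 2 ∧ divDeg D' = 2 ∧
      ∃ f : F, f ≠ 0 ∧ ∀ P : Place k F, D' P = D P + P.ord f)) :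
    Submodule.span k {h : F | ∃ f ∈ RRSpace k F D, ∃ g ∈ RRSpace k F D', h = f * g}
      = RRSpace k F (D + D') := by
  set V := Submodule.span k
    {h : F | ∃ f ∈ RRSpace k F D, ∃ g ∈ RRSpace k F D', h = f * g} with hV
  have hVgen : ∀ f g : F, f ∈ RRSpace k F D → g ∈ RRSpace k F D' → f * g ∈ V :=
    fun f g hf hg => Submodule.subset_span ⟨f, hf, g, hg, rfl⟩
  have hVle : V ≤ RRSpace k F (D + D') := by
    rw [hV, Submodule.span_le]
    rintro h ⟨f, hf, g, hg, rfl⟩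
    exact mul_mem_RRSpace hf hg
  have hbase : RRSpace k F D' ≤ V := fun x hx =>
    Submodule.subset_span ⟨1, one_mem_RRSpace hD, x, hx, (one_mul x).symm⟩
  obtain ⟨P₁, h, hP₁, hgen, hmem, hnmem⟩ :=
    first_step hgenus1 hprin hD hD' hn'2 hdeg hnotbad
  have hhV : h ∈ V := by
    obtain ⟨f', hf', g', hg', rfl⟩ := hgen
    exact hVgen f' g' hf' hg'
  have hfirst : RRSpace k F (D' + Finsupp.single P₁ 1) ≤ V :=
    step_lemma hgenus1 (by omega) hbase hhV hmem hnmem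
  have hclaim := claim hgenus1 hD' hn'2 hVgen hfirst (divDeg D).toNat D hD
    (fun R => le_refl _) hP₁ (by rw [Int.toNat_of_nonneg (by omega)])
  apply le_antisymm hVle
  have hcomm : D + D' = D' + D := add_comm _ _
  rw [hcomm]
  exact hclaim

end Main

end RRAux

open RRAux Module Submodule

/-- Let `X` be a smooth projective curve of genus `1` over an algebraically closed field `k`
(modeled by its function field `F` with its places: every nonzero `f ∈ F` has a principal
divisor of degree `0`, and `dim L(D) = deg D` whenever `deg D ≥ 1`, which is Riemann–Roch in
genus `1`).  For effective divisors `D, D'` with `deg D ≥ deg D'`, the multiplication map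
`H⁰(X,D) ⊗ H⁰(X,D') → H⁰(X,D+D')` fails to be surjective if and only if `deg D' = 1`, or
`deg D = deg D' = 2` and `D` is linearly equivalent to `D'`. -/
theorem genus_one_multiplication_surjectivity
    {k F : Type*} [Field k] [IsAlgClosed k] [Field F] [Algebra k F]
    (hprin : ∀ f : F, f ≠ 0 → ∃ Df : Place k F →₀ ℤ,
      (∀ P : Place k F, Df P = P.ord f) ∧ divDeg Df = 0)
    (hgenus1 : ∀ D : Place k F →₀ ℤ, 1 ≤ divDeg D →
      (Module.finrank k (RRSpace k F D) : ℤ) = divDeg D)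
    (D D' : Place k F →₀ ℤ)
    (hD : ∀ P : Place k F, 0 ≤ D P) (hD' : ∀ P : Place k F, 0 ≤ D' P)
    (hdeg : divDeg D' ≤ divDeg D) :
    ¬(Submodule.span k
          {h : F | ∃ f ∈ RRSpace k F D, ∃ g ∈ RRSpace k F D', h = f * g}
        = RRSpace k F (D + D'))
      ↔ (divDeg D' = 1 ∨
          (divDeg D = 2 ∧ divDeg D' = 2 ∧
            ∃ f : F, f ≠ 0 ∧ ∀ P : Place k F, D' P = D P + P.ord f)) := by
    classical
  constructor
  · -- not surjective → one of the two bad cases; we prove the contrapositive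
    intro hns
    by_contra hrhs
    push_neg at hrhs
    obtain ⟨h1, h2⟩ := hrhs
    by_cases h0 : divDeg D' = 0
    · -- D' = 0 : multiplication by constants, surjective
      have hD'0 : D' = 0 := effective_deg_zero hD' h0
      apply hns
      subst hD'0
      apply le_antisymm
      · rw [Submodule.span_le]
        rintro h ⟨f, hf, g, hg, rfl⟩
        exact mul_mem_RRSpace hf hg
      · intro x hx
        have hx' : x ∈ RRSpace k F D := by rwa [add_zero] at hx
        exact Submodule.subset_span
          ⟨x, hx', 1, one_mem_RRSpace (fun P => le_refl 0), (mul_one x).symm⟩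
    · have h2' : 2 ≤ divDeg D' := by
        have := divDeg_nonneg hD'
        omega
      exact hns (surj hgenus1 hprin hD hD' h2' hdeg (by
        rintro ⟨ha, hb, f, hf0, hf⟩
        obtain ⟨P, hP⟩ := h2 ha hb f hf0
        exact hP (hf P)))
  · rintro (h1 | ⟨hd2, hd'2, f₀, hf₀0, hf₀⟩)heq
    · -- deg D' = 1 : L(D') consists of constants
      have hn1 : 1 ≤ divDeg D := le_trans (by omega) hdeg
      have hfr' : (Module.finrank k (RRSpace k F D') : ℤ) = 1 := by
        rw [hgenus1 D' (by omega), h1]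
      haveI : FiniteDimensional k (RRSpace k F D') :=
        findim_RR hgenus1 (by omega)
      have hle1 : Submodule.span k {(1 : F)} ≤ RRSpace k F D' := by
        rw [Submodule.span_le, Set.singleton_subset_iff]
        exact one_mem_RRSpace hD'
      have heq1 : Submodule.span k {(1 : F)} = RRSpace k F D' := by
        apply Submodule.eq_of_le_of_finrank_le hle1
        rw [finrank_span_singleton (K := k) (one_ne_zero : (1 : F) ≠ 0)]
        omega
      have hVleD : Submodule.span k
          {h : F | ∃ f ∈ RRSpace k F D, ∃ g ∈ RRSpace k F D', h = f * g}
          ≤ RRSpace k F D := by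
        rw [Submodule.span_le]
        rintro h ⟨f, hf, g, hg, rfl⟩
        rw [← heq1] at hg
        obtain ⟨c, hc⟩ := Submodule.mem_span_singleton.mp hg
        have : f * g = c • f := by
          rw [← hc, Algebra.smul_def, Algebra.smul_def, mul_one]; ring
        rw [this]
        exact Submodule.smul_mem _ c hf
      rw [heq] at hVleD
      have hDD' : RRSpace k F (D + D') = RRSpace k F D := by
        apply le_antisymm hVleD
        apply RRSpace_mono
        intro R
        rw [Finsupp.add_apply]
        have := hD' R
        omega
      have ha := hgenus1 (D + D') (by rw [divDeg_add]; omega)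
      have hb := hgenus1 D (by omega)
      rw [hDD', divDeg_add] at ha
      omega
    · -- deg D = deg D' = 2, D' = D + div f₀
      have hdeg4 : divDeg (D + D') = 4 := by rw [divDeg_add]; omega
      haveI : FiniteDimensional k (RRSpace k F D) := findim_RR hgenus1 (by omega)
      have hfrD : (Module.finrank k (RRSpace k F D) : ℤ) = 2 := by
        rw [hgenus1 D (by omega), hd2]
      -- find u with L(D) = span {1, u}
      have h1mem : (1 : F) ∈ RRSpace k F D := one_mem_RRSpace hD
      have hnle : ¬(RRSpace k F D ≤ Submodule.span k {(1 : F)}) := by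
        intro hle
        have heq1 : Submodule.span k {(1 : F)} = RRSpace k F D :=
          le_antisymm (by rw [Submodule.span_le, Set.singleton_subset_iff]; exact h1mem) hle
        have := finrank_span_singleton (K := k) (one_ne_zero : (1 : F) ≠ 0)
        rw [heq1] at this
        omega
      obtain ⟨u, huD, hu1⟩ := SetLike.not_le_iff_exists.mp hnle
      have hspan : Submodule.span k {(1 : F), u} = RRSpace k F D := by
        have hle : Submodule.span k {(1 : F), u} ≤ RRSpace k F D := by
          rw [Submodule.span_le]
          rintro x (rfl | rfl)
          · exact h1mem
          · exact huD
        haveI : FiniteDimensional k (Submodule.span k {(1 : F), u}) :=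
          Submodule.finiteDimensional_of_le hle
        have hlt : Submodule.span k {(1 : F)} < Submodule.span k {(1 : F), u} := by
          apply lt_of_le_of_ne (Submodule.span_mono (Set.singleton_subset_iff.mpr (by simp)))
          intro hcontra
          apply hu1
          rw [hcontra]
          exact Submodule.subset_span (by simp)
        have hfr1 := finrank_span_singleton (one_ne_zero : (1 : F) ≠ 0) (K := k)
        have hlt' := Submodule.finrank_lt_finrank_of_lt hlt
        have hle' := finrank_le_of_le hle
        apply Submodule.eq_of_le_of_finrank_le hle
        omega
      -- the span of products is contained in a 3-dimensional space
      set s : Finset F := {f₀⁻¹, f₀⁻¹ * u, f₀⁻¹ * (u * u)} with hs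
      set W := Submodule.span k (s : Set F) with hW
      have hVW : Submodule.span k
          {h : F | ∃ f ∈ RRSpace k F D, ∃ g ∈ RRSpace k F D', h = f * g} ≤ W := by
        rw [Submodule.span_le]
        rintro h ⟨f, hf, g, hg, rfl⟩
        rcases eq_or_ne g 0 with rfl | hg0
        · rw [mul_zero]; exact zero_mem _
        -- g * f₀ ∈ L(D)
        have hgf₀ : g * f₀ ∈ RRSpace k F D := by
          apply mem_RRSpace_iff.mpr
          intro hne R
          rw [R.ord_mul hg0 hf₀0]
          have hgord := ord_ge_of_mem hg hg0 R
          have := hf₀ R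
          omega
        rw [← hspan] at hf hgf₀
        obtain ⟨a, b, hab⟩ := Submodule.mem_span_pair.mp hf
        obtain ⟨c, d, hcd⟩ := Submodule.mem_span_pair.mp hgf₀
        have hgval : g = f₀⁻¹ * (c • (1 : F) + d • u) := by
          rw [hcd]
          field_simp
        have hexp : f * g = (a * c) • f₀⁻¹ + (a * d + b * c) • (f₀⁻¹ * u)
            + (b * d) • (f₀⁻¹ * (u * u)) := by
          rw [← hab, hgval]
          simp only [Algebra.smul_def, map_mul, map_add]
          ring
        rw [hexp]
        refine add_mem (add_mem ?_ ?_) ?_ <;>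
          exact Submodule.smul_mem _ _ (Submodule.subset_span (by simp [hs]))
      have hcard : s.card ≤ 3 := by
        have h1 := Finset.card_insert_le (f₀⁻¹) ({f₀⁻¹ * u, f₀⁻¹ * (u * u)} : Finset F)
        have h2 := Finset.card_insert_le (f₀⁻¹ * u) ({f₀⁻¹ * (u * u)} : Finset F)
        have h3 : ({f₀⁻¹ * (u * u)} : Finset F).card = 1 := Finset.card_singleton _
        rw [hs]
        omega
      have hfrW : Module.finrank k W ≤ 3 := by
        calc Module.finrank k W ≤ s.card := by
              rw [hW]
              exact finrank_span_finset_le_card s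
          _ ≤ 3 := hcard
      rw [heq] at hVW
      haveI : FiniteDimensional k W := inferInstance
      have h4 := hgenus1 (D + D') (by omega)
      rw [hdeg4] at h4
      have := finrank_le_of_le hVW
      omega
end

section
/- Let g ≥ 3. Then the monomial ideal I = ⟨ xᵢxⱼ : 1 ≤ i ≤ j ≤ g-3 ⟩ + ⟨ xᵢ x_{g-2}² : 1 ≤ i ≤ g-3 ⟩ + ⟨ x_{g-2}⁴ ⟩ in k[x₁,...,x_g] (all variables of degree 1) has Hilbert function dim_k (k[x]/I)_d = (2d-1)(g-1) for all d ≥ 2. -/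
/-!
Modulo a monomial ideal, the monomials divisible by no generator (the standard monomials) form a
basis, so the Hilbert function counts standard monomials of degree `d`. For this ideal these are
`x_i^ε x_{g-2}^a x_{g-1}^b x_g^c` with `i ≤ g - 3`, `ε ≤ 1`, and `a ≤ 3` if `ε = 0`, `a ≤ 1` if
`ε = 1`. There are `∑_{a ≤ 3} (d + 1 - a) = 4d - 2` of the first kind and
`∑_{a ≤ 1} (d - a) = 2d - 1` for each of the `g - 3` choices of `i`, in total `(2d - 1)(g - 1)`.
-/

open MvPolynomial Fin

section MonomialIdeal

variable {σ R : Type*} [CommRing R] {S : Set (σ →₀ ℕ)}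

theorem mk_monomial_eq_zero_of_le {s m : σ →₀ ℕ} (hs : s ∈ S) (hsm : s ≤ m) (c : R) :
    Ideal.Quotient.mkₐ R (Ideal.span ((fun s => monomial s (1 : R)) '' S)) (monomial m c) = 0 := by
  rw [Ideal.Quotient.mkₐ_eq_mk, Ideal.Quotient.eq_zero_iff_mem, mem_ideal_span_monomial_image]
  intro m' hm'
  rw [Finset.mem_singleton.mp (support_monomial_subset hm')]
  exact ⟨s, hs, hsm⟩

theorem linearIndependent_mk_monomial {T : Set (σ →₀ ℕ)} (hT : ∀ m ∈ T, ∀ s ∈ S, ¬s ≤ m) :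
    LinearIndependent R fun m : T =>
      Ideal.Quotient.mkₐ R (Ideal.span ((fun s => monomial s (1 : R)) '' S))
        (monomial (m : σ →₀ ℕ) 1) := by
  classical
  rw [linearIndependent_iff']
  intro t c hc i hi
  set p := ∑ j ∈ t, monomial (j : σ →₀ ℕ) (c j)
  have hp : p ∈ Ideal.span ((fun s => monomial s (1 : R)) '' S) := by
    rw [← Ideal.Quotient.eq_zero_iff_mem, ← Ideal.Quotient.mkₐ_eq_mk R, map_sum, ← hc]
    refine Finset.sum_congr rfl fun j _ => ?_
    rw [← map_smul, smul_monomial, smul_eq_mul, mul_one]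
  have hcoeff : p.coeff i = c i := by
    rw [coeff_sum, Finset.sum_eq_single_of_mem i hi fun j _ hji => ?_, coeff_monomial, if_pos rfl]
    rw [coeff_monomial, if_neg (fun h => hji (Subtype.ext h))]
  by_contra hci
  obtain ⟨s, hs, hsi⟩ := mem_ideal_span_monomial_image.mp hp i
    (mem_support_iff.mpr (hcoeff ▸ hci))
  exact hT i i.2 s hs hsi

theorem map_mk_homogeneousSubmodule_eq_span {n : ℕ} {B : Finset (σ →₀ ℕ)}
    (hB : ∀ m, m ∈ B ↔ m.degree = n ∧ ∀ s ∈ S, ¬s ≤ m) :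
    (homogeneousSubmodule σ R n).map
        (Ideal.Quotient.mkₐ R (Ideal.span ((fun s => monomial s (1 : R)) '' S))).toLinearMap =
      Submodule.span R (Set.range fun m : B =>
        Ideal.Quotient.mkₐ R (Ideal.span ((fun s => monomial s (1 : R)) '' S))
          (monomial (m : σ →₀ ℕ) 1)) := by
  rw [homogeneousSubmodule_eq_finsupp_supported, AddMonoidAlgebra.supported_eq_span_single,
    Submodule.map_span]
  apply le_antisymm <;> rw [Submodule.span_le]
  · rintro _ ⟨_, ⟨m, hm, rfl⟩, rfl⟩
    by_cases hstd : ∀ s ∈ S, ¬s ≤ m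
    · exact Submodule.subset_span ⟨⟨m, (hB m).2 ⟨hm, hstd⟩⟩, rfl⟩
    · obtain ⟨s, hs, hsm⟩ : ∃ s ∈ S, s ≤ m := by simpa using hstd
      change Ideal.Quotient.mkₐ R _ (monomial m 1) ∈ _
      rw [mk_monomial_eq_zero_of_le hs hsm]
      exact Submodule.zero_mem _
  · rintro _ ⟨m, rfl⟩
    exact Submodule.subset_span ⟨_, ⟨m, ((hB m).1 m.2).1, rfl⟩, rfl⟩

theorem finrank_map_mk_homogeneousSubmodule [Nontrivial R] {n : ℕ} {B : Finset (σ →₀ ℕ)}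
    (hB : ∀ m, m ∈ B ↔ m.degree = n ∧ ∀ s ∈ S, ¬s ≤ m) :
    Module.finrank R ((homogeneousSubmodule σ R n).map
        (Ideal.Quotient.mkₐ R (Ideal.span ((fun s => monomial s (1 : R)) '' S))).toLinearMap) =
      B.card := by
  rw [map_mk_homogeneousSubmodule_eq_span hB, ← Fintype.card_coe]
  exact finrank_span_eq_card (linearIndependent_mk_monomial (T := B) fun m hm => ((hB m).1 hm).2)

end MonomialIdeal

theorem Finsupp.single_add_single_le_iff {α M : Type*} [AddCommMonoid M] [PartialOrder M]
    [CanonicallyOrderedAdd M] {a b : α} (hab : a ≠ b) {x y : M} {f : α →₀ M} :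
    single a x + single b y ≤ f ↔ x ≤ f a ∧ y ≤ f b := by
  classical
  refine ⟨fun h => ⟨?_, ?_⟩, fun ⟨ha, hb⟩ c => ?_⟩
  · simpa [hab.symm] using h a
  · simpa [hab] using h b
  · simp only [coe_add, Pi.add_apply, single_apply]
    split_ifs with hac hbc hbc
    · exact absurd (hac.trans hbc.symm) hab
    · simpa [← hac] using ha
    · simpa [← hbc] using hb
    · simp

theorem Fin.castAdd_ne_natAdd {m n : ℕ} (i : Fin m) (j : Fin n) : castAdd n i ≠ natAdd m j :=
  Fin.ne_of_val_ne (by simp only [val_castAdd, val_natAdd]; omega)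

namespace CanonicalGin

variable {n : ℕ}

/-- With `g = n + 3`, `castAdd 3 i` is the variable `x_{i+1}` of the paper and `natAdd n 0`,
`natAdd n 1`, `natAdd n 2` are `x_{g-2}`, `x_{g-1}`, `x_g`. -/
def exponents (n : ℕ) : Set (Fin (n + 3) →₀ ℕ) :=
  {s | ∃ i j : Fin n, i ≤ j ∧ s = .single (castAdd 3 i) 1 + .single (castAdd 3 j) 1} ∪
  {s | ∃ i : Fin n, s = .single (castAdd 3 i) 1 + .single (natAdd n 0) 2} ∪
  {.single (natAdd n 0) 4}

theorem forall_not_le_exponents_iff {m : Fin (n + 3) →₀ ℕ} :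
    (∀ s ∈ exponents n, ¬s ≤ m) ↔
      (∀ i j, i ≠ j → m (castAdd 3 i) = 0 ∨ m (castAdd 3 j) = 0) ∧
      (∀ i, m (castAdd 3 i) ≤ 1) ∧
      (∀ i, m (castAdd 3 i) = 0 ∨ m (natAdd n 0) ≤ 1) ∧
      m (natAdd n 0) ≤ 3 := by
  have hne : ∀ i j : Fin n, castAdd 3 i ≠ castAdd 3 j ↔ i ≠ j := fun i j => by simp
  have hne' : ∀ i : Fin n, castAdd 3 i ≠ natAdd n 0 := fun i => castAdd_ne_natAdd i 0
  constructor
  · intro h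
    refine ⟨fun i j hij => ?_, fun i => ?_, fun i => ?_, ?_⟩
    · by_contra! hm
      rcases le_total i j with hle | hle
      · refine h _ (.inl (.inl ⟨i, j, hle, rfl⟩)) ?_
        rw [Finsupp.single_add_single_le_iff ((hne i j).2 hij)]
        omega
      · refine h _ (.inl (.inl ⟨j, i, hle, rfl⟩)) ?_
        rw [Finsupp.single_add_single_le_iff ((hne j i).2 hij.symm)]
        omega
    · by_contra! hm
      refine h _ (.inl (.inl ⟨i, i, le_rfl, rfl⟩)) ?_
      rw [← Finsupp.single_add, Finsupp.single_le_iff]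
      omega
    · by_contra! hm
      refine h _ (.inl (.inr ⟨i, rfl⟩)) ?_
      rw [Finsupp.single_add_single_le_iff (hne' i)]
      omega
    · by_contra! hm
      exact h _ (.inr rfl) (Finsupp.single_le_iff.2 hm)
  · rintro ⟨h₁, h₂, h₃, h₄⟩ s ((⟨i, j, hij, rfl⟩ | ⟨i, rfl⟩) | rfl) hle
    · obtain rfl | hij := eq_or_ne i j
      · rw [← Finsupp.single_add, Finsupp.single_le_iff] at hle
        have := h₂ i
        omega
      · rw [Finsupp.single_add_single_le_iff ((hne i j).2 hij)] at hle
        have := h₁ i j hij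
        omega
    · rw [Finsupp.single_add_single_le_iff (hne' i)] at hle
      have := h₃ i
      omega
    · rw [Finsupp.single_le_iff] at hle
      omega

noncomputable def linearPart : Option (Fin n) → Fin (n + 3) →₀ ℕ
  | none => 0
  | some i => .single (castAdd 3 i) 1

@[simp]
theorem linearPart_apply_castAdd (o : Option (Fin n)) (i : Fin n) :
    linearPart o (castAdd 3 i) = if o = some i then 1 else 0 := by
  cases o <;> simp [linearPart, Finsupp.single_apply, eq_comm]

@[simp]
theorem linearPart_apply_natAdd (o : Option (Fin n)) (j : Fin 3) :
    linearPart o (natAdd n j) = 0 := by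
  cases o with
  | none => rfl
  | some i => exact Finsupp.single_eq_of_ne (castAdd_ne_natAdd i j).symm

theorem degree_eq_sum_castAdd_add (m : Fin (n + 3) →₀ ℕ) :
    m.degree = ∑ i : Fin n, m (castAdd 3 i) + m (natAdd n 0) + m (natAdd n 1) + m (natAdd n 2) := by
  rw [Finsupp.degree_eq_sum, Fin.sum_univ_add, Fin.sum_univ_three]
  ring

/-- `⟨o, a, b⟩` stands for `x_o x_{g-2}^a x_{g-1}^b x_g^c`, where `x_none = 1` and `c` is
determined by the total degree (see `standardMonomial`). -/
abbrev Code (n : ℕ) := Σ _ : Option (Fin n), Σ _ : ℕ, ℕ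

noncomputable def codes (n d : ℕ) : Finset (Code n) :=
  Finset.univ.sigma fun o => (Finset.range (o.elim 4 fun _ => 2)).sigma fun a =>
    Finset.range (d + 1 - (linearPart o).degree - a)

noncomputable def standardMonomial (d : ℕ) (x : Code n) : Fin (n + 3) →₀ ℕ :=
  linearPart x.1 + .single (natAdd n 0) x.2.1 + .single (natAdd n 1) x.2.2 +
    .single (natAdd n 2) (d - (linearPart x.1).degree - x.2.1 - x.2.2)

theorem card_codes {d : ℕ} (hd : 2 ≤ d) : (codes n d).card = (2 * d - 1) * (n + 2) := by
  simp only [codes, linearPart, Finset.card_sigma, Finset.card_range, Fintype.sum_option,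
    Option.elim_none, Option.elim_some, map_zero, Finsupp.degree_single, tsub_zero,
    Finset.sum_range_succ, Finset.range_one, Finset.sum_singleton, add_tsub_cancel_right,
    Nat.reduceSubDiff, Finset.sum_const, Finset.card_univ, Fintype.card_fin, smul_eq_mul]
  obtain ⟨e, rfl⟩ : ∃ e, d = e + 2 := ⟨d - 2, by omega⟩
  rw [show 2 * (e + 2) - 1 = 2 * e + 3 by omega, Nat.add_sub_cancel,
    show e + 2 - 1 = e + 1 by omega]
  ring

variable {d : ℕ}

@[simp]
theorem standardMonomial_apply_castAdd (x : Code n) (i : Fin n) :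
    standardMonomial d x (castAdd 3 i) = linearPart x.1 (castAdd 3 i) := by
  simp [standardMonomial, Finsupp.single_eq_of_ne, castAdd_ne_natAdd]

@[simp]
theorem standardMonomial_apply_natAdd_zero (x : Code n) :
    standardMonomial d x (natAdd n 0) = x.2.1 := by
  simp [standardMonomial, Fin.ext_iff]

@[simp]
theorem standardMonomial_apply_natAdd_one (x : Code n) :
    standardMonomial d x (natAdd n 1) = x.2.2 := by
  simp [standardMonomial, Fin.ext_iff]

@[simp]
theorem standardMonomial_apply_natAdd_two (x : Code n) :
    standardMonomial d x (natAdd n 2) = d - (linearPart x.1).degree - x.2.1 - x.2.2 := by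
  simp [standardMonomial, Fin.ext_iff]

theorem mem_codes {x : Code n} :
    x ∈ codes n d ↔
      x.2.1 < x.1.elim 4 (fun _ => 2) ∧ (linearPart x.1).degree + x.2.1 + x.2.2 ≤ d := by
  simp only [codes, Finset.mem_sigma, Finset.mem_univ, Finset.mem_range, true_and]
  omega

theorem degree_standardMonomial {x : Code n} (hx : x ∈ codes n d) :
    (standardMonomial d x).degree = d := by
  have := (mem_codes.1 hx).2
  simp only [standardMonomial, map_add, Finsupp.degree_single]
  omega

theorem injOn_standardMonomial : Set.InjOn (standardMonomial (n := n) d) (codes n d) := by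
  rintro ⟨o, a, b⟩ - ⟨o', a', b'⟩ - h
  obtain rfl : a = a' := by simpa using congr($h (natAdd n 0))
  obtain rfl : b = b' := by simpa using congr($h (natAdd n 1))
  obtain rfl : o = o' := Option.ext fun i => by
    have := congr($h (castAdd 3 i))
    simp only [standardMonomial_apply_castAdd, linearPart_apply_castAdd] at this
    split_ifs at this <;> simp_all
  rfl

theorem forall_not_le_standardMonomial {x : Code n} (hx : x ∈ codes n d) :
    ∀ s ∈ exponents n, ¬s ≤ standardMonomial d x := by
  obtain ⟨o, a, b⟩ := x
  have ha := (mem_codes.1 hx).1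
  rw [forall_not_le_exponents_iff]
  simp only [standardMonomial_apply_castAdd, linearPart_apply_castAdd,
    standardMonomial_apply_natAdd_zero]
  refine ⟨fun i j hij => ?_, fun i => ?_, fun i => ?_, ?_⟩
  · by_cases hi : o = some i <;> simp_all
  · split_ifs <;> omega
  · split_ifs with hi
    · subst hi
      simp only [Option.elim] at ha
      omega
    · simp
  · cases o <;> simp only [Option.elim] at ha <;> omega

theorem exists_linearPart {m : Fin (n + 3) →₀ ℕ} (hm : ∀ s ∈ exponents n, ¬s ≤ m) :
    ∃ o : Option (Fin n), (∀ i, m (castAdd 3 i) = linearPart o (castAdd 3 i)) ∧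
      m (natAdd n 0) < o.elim 4 fun _ => 2 := by
  obtain ⟨h₁, h₂, h₃, h₄⟩ := forall_not_le_exponents_iff.1 hm
  by_cases h : ∃ i, m (castAdd 3 i) ≠ 0
  · obtain ⟨i, hi⟩ := h
    refine ⟨some i, fun j => ?_, ?_⟩
    · rw [linearPart_apply_castAdd]
      split_ifs with hij
      · cases Option.some_injective _ hij
        have := h₂ i
        omega
      · have := h₁ i j fun h => hij (h ▸ rfl)
        omega
    · have := h₃ i
      simp only [Option.elim]
      omega
  · simp only [not_exists, not_not] at h
    exact ⟨none, by simpa using h, by simp only [Option.elim]; omega⟩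

theorem mem_image_standardMonomial_iff {m : Fin (n + 3) →₀ ℕ} :
    m ∈ (codes n d).image (standardMonomial d) ↔
      m.degree = d ∧ ∀ s ∈ exponents n, ¬s ≤ m := by
  rw [Finset.mem_image]
  constructor
  · rintro ⟨x, hx, rfl⟩
    exact ⟨degree_standardMonomial hx, forall_not_le_standardMonomial hx⟩
  · rintro ⟨rfl, hm⟩
    obtain ⟨o, hlin, ha⟩ := exists_linearPart hm
    have hdeg : m.degree =
        (linearPart o).degree + m (natAdd n 0) + m (natAdd n 1) + m (natAdd n 2) := by
      simp [degree_eq_sum_castAdd_add m, degree_eq_sum_castAdd_add (linearPart o), hlin]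
    refine ⟨⟨o, m (natAdd n 0), m (natAdd n 1)⟩, mem_codes.2 ⟨ha, ?_⟩, ?_⟩
    · dsimp only
      omega
    · ext y
      induction y using Fin.addCases with
      | left i => simp [hlin]
      | right j =>
        match j with
        | 0 => exact standardMonomial_apply_natAdd_zero _
        | 1 => exact standardMonomial_apply_natAdd_one _
        | 2 =>
          rw [standardMonomial_apply_natAdd_two]
          dsimp only
          omega

theorem generators_eq_image_exponents {R : Type*} [CommSemiring R] :
    ({p : MvPolynomial (Fin (n + 3)) R | ∃ i j : Fin (n + 3), i ≤ j ∧ (j : ℕ) + 4 ≤ n + 3 ∧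
        p = X i * X j} ∪
      {p | ∃ i : Fin (n + 3), (i : ℕ) + 4 ≤ n + 3 ∧
        p = X i * X (⟨n + 3 - 3, by omega⟩ : Fin (n + 3)) ^ 2} ∪
      {X (⟨n + 3 - 3, by omega⟩ : Fin (n + 3)) ^ 4}) =
      (fun s => monomial s (1 : R)) '' exponents n := by
  have hpivot : (⟨n + 3 - 3, by omega⟩ : Fin (n + 3)) = natAdd n 0 := Fin.ext (by simp)
  have hsmall : ∀ i : Fin (n + 3), (i : ℕ) + 4 ≤ n + 3 ↔ ∃ i' : Fin n, castAdd 3 i' = i :=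
    fun i => ⟨fun h => ⟨i.castLT (by omega), Fin.ext rfl⟩, by rintro ⟨i', rfl⟩; simp⟩
  simp only [exponents, Set.image_union, Set.image_singleton, hpivot, X_pow_eq_monomial]
  simp only [X, monomial_mul, one_mul]
  congr 2 <;> ext p <;> simp only [Set.mem_ofPred_eq, Set.mem_image]
  · constructor
    · rintro ⟨i, j, hij, hj, rfl⟩
      obtain ⟨j', rfl⟩ := (hsmall j).1 hj
      obtain ⟨i', rfl⟩ := (hsmall i).1 (by rw [Fin.le_iff_val_le_val] at hij; omega)
      exact ⟨_, ⟨i', j', hij, rfl⟩, rfl⟩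
    · rintro ⟨_, ⟨i', j', hij, rfl⟩, rfl⟩
      exact ⟨_, _, hij, (hsmall _).2 ⟨j', rfl⟩, rfl⟩
  · constructor
    · rintro ⟨i, hi, rfl⟩
      obtain ⟨i', rfl⟩ := (hsmall i).1 hi
      exact ⟨_, ⟨i', rfl⟩, rfl⟩
    · rintro ⟨_, ⟨i', rfl⟩, rfl⟩
      exact ⟨_, (hsmall _).2 ⟨i', rfl⟩, rfl⟩

end CanonicalGin

/-- The generic initial ideal of the canonical ideal of a nonhyperelliptic curve of genus
`g ≥ 3`: the monomial ideal
`I = ⟨xᵢxⱼ : 1 ≤ i ≤ j ≤ g-3⟩ + ⟨xᵢ x_{g-2}² : 1 ≤ i ≤ g-3⟩ + ⟨x_{g-2}⁴⟩`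
in `k[x₁,...,x_g]` (variables of degree `1`, indexed here by `Fin g` with `xᵢ = X (i-1)`)
has Hilbert function `dim_k (k[x]/I)_d = (2d-1)(g-1)` for all `d ≥ 2`. -/
theorem hilbert_function_canonical_gin {k : Type*} [Field k] (g : ℕ) (hg : 3 ≤ g)
    (d : ℕ) (hd : 2 ≤ d) :
    Module.finrank k
        ((MvPolynomial.homogeneousSubmodule (Fin g) k d).map
          (Ideal.Quotient.mkₐ k (Ideal.span
            (({p : MvPolynomial (Fin g) k | ∃ i j : Fin g, i ≤ j ∧ (j : ℕ) + 4 ≤ g ∧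
                p = X i * X j} ∪
              {p : MvPolynomial (Fin g) k | ∃ i : Fin g, (i : ℕ) + 4 ≤ g ∧
                p = X i * X (⟨g - 3, by omega⟩ : Fin g) ^ 2} ∪
              {X (⟨g - 3, by omega⟩ : Fin g) ^ 4}) : Set (MvPolynomial (Fin g) k)))).toLinearMap)
      = (2 * d - 1) * (g - 1) := by
  obtain ⟨n, rfl⟩ : ∃ n, g = n + 3 := ⟨g - 3, by omega⟩
  rw [CanonicalGin.generators_eq_image_exponents,
    finrank_map_mk_homogeneousSubmodule fun _ => CanonicalGin.mem_image_standardMonomial_iff,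
    Finset.card_image_of_injOn CanonicalGin.injOn_standardMonomial, CanonicalGin.card_codes hd]
  rfl
end
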